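/- arXiv:2103.09634 — 6 statements merged into one kernel-verified Lean document; each statement's English description precedes it below -/
import Mathlib

section
/- Assume (H1)–(H3). Let ε_k → 0, let n_k be positive solutions of (E) with parameter ε_k, and suppose u_k = ε_k log n_k converges uniformly on closure(Ω) × [−A, A] to a continuous function u depending only on θ. Then: (a) for every continuous nonnegative function φ with compact support contained in Ω × {θ ∈ (−A,A) : u(θ) < 0}, the integrals ∫_Ω ∫_{−A}^{A} φ(x,θ) n_k(x,θ) dθ dx converge to 0 as k → ∞; (b) if moreover u is Lipschitz continuous with max_{[−A,A]} u = 0 and u is a viscosity solution of −|∂_θ u|² = −Λ(θ) on (−A,A) with Λ : [−A,A] → ℝ continuous, then Λ(θ) ≥ 0 for every θ ∈ [−A,A], and Λ(θ₀) = 0 for every θ₀ ∈ (−A,A) with u(θ₀) = 0. -/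
open MeasureTheory Set Real Filter Topology

noncomputable section

/-- Partial derivative in the first (spatial) variable. -/
def pdx (f : ℝ → ℝ → ℝ) (x θ : ℝ) : ℝ := deriv (fun x' => f x' θ) x

/-- Partial derivative in the second (trait) variable. -/
def pdt (f : ℝ → ℝ → ℝ) (x θ : ℝ) : ℝ := deriv (fun θ' => f x θ') θ

/-- The nonlocal dispersion operator `L`, acting in the spatial variable. -/
def nlL (Ω : Set ℝ) (K : ℝ → ℝ) (f : ℝ → ℝ → ℝ) (x θ : ℝ) : ℝ :=
  ∫ y in Ω, (f x θ - f y θ) * K (x - y)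

/-- Total population density at `x`. -/
def rhoTot (A : ℝ) (n : ℝ → ℝ → ℝ) (x : ℝ) : ℝ := ∫ θ in (-A)..A, n x θ

/-- A positive solution of equation (E) with parameter `ε`:
a positive `C²` function satisfying the equation on `Ω × (-A, A)` together with
Neumann boundary conditions in both variables (`Endp` is the set of endpoints of the
intervals composing `Ω`). -/
def IsPosSolE (Ω Endp : Set ℝ) (A : ℝ) (K : ℝ → ℝ) (R : ℝ → ℝ → ℝ)
    (ε : ℝ) (n : ℝ → ℝ → ℝ) : Prop :=
  ContDiff ℝ 2 (Function.uncurry n) ∧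
  (∀ x ∈ closure Ω, ∀ θ ∈ Icc (-A) A, 0 < n x θ) ∧
  (∀ x ∈ Ω, ∀ θ ∈ Ioo (-A) A,
    -ε ^ 2 * pdt (pdt n) x θ - pdx (pdx n) x θ + nlL Ω K n x θ
      = n x θ * (R x θ - rhoTot A n x)) ∧
  (∀ x ∈ Endp, ∀ θ ∈ Icc (-A) A, pdx n x θ = 0) ∧
  (∀ x ∈ closure Ω, pdt n x A = 0 ∧ pdt n x (-A) = 0)

/-- `u` is a viscosity solution of `-|∂_θ u|² = -Λ(θ)` on the interior `(-A, A)`. -/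
def IsViscSolInterior (A : ℝ) (Lam : ℝ → ℝ) (u : ℝ → ℝ) : Prop :=
  (∀ φ : ℝ → ℝ, ContDiff ℝ 1 φ → ∀ θs ∈ Ioo (-A) A,
      (∀ θ ∈ Icc (-A) A, u θ - φ θ ≤ u θs - φ θs) →
      -(deriv φ θs) ^ 2 + Lam θs ≤ 0) ∧
  (∀ φ : ℝ → ℝ, ContDiff ℝ 1 φ → ∀ θs ∈ Ioo (-A) A,
      (∀ θ ∈ Icc (-A) A, u θs - φ θs ≤ u θ - φ θ) →
      0 ≤ -(deriv φ θs) ^ 2 + Lam θs)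

/-- concentration of the phenotypic densities on the zero set of the
limit of the Hopf-Cole transforms, and the induced properties of the eigenvalue `Λ`. -/
theorem concentration_and_support
    (m : ℕ) (a b : Fin (m + 1) → ℝ) (Ω : Set ℝ)
    (hab : ∀ i, a i < b i)
    (hord : ∀ i j : Fin (m + 1), i < j → b i < a j)
    (hΩ : Ω = ⋃ i, Ioo (a i) (b i))
    (A : ℝ) (hA : 0 < A)
    (R : ℝ → ℝ → ℝ) (C_R : ℝ)
    (hRsmooth : ContDiff ℝ 1 (Function.uncurry R))
    (hRbound : ∀ x ∈ closure Ω, ∀ θ ∈ Icc (-A) A,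
      |R x θ| ≤ C_R ∧ |pdx R x θ| ≤ C_R ∧ |pdt R x θ| ≤ C_R)
    (K : ℝ → ℝ) (c_K C_K : ℝ)
    (hKsmooth : ContDiff ℝ 1 K)
    (hKeven : ∀ x, K (-x) = K x)
    (hcK : 0 < c_K)
    (hKbound : ∀ x, c_K ≤ K x ∧ K x ≤ C_K ∧ |deriv K x| ≤ C_K)
    (ε : ℕ → ℝ) (hεpos : ∀ k, 0 < ε k) (hεlim : Tendsto ε atTop (𝓝 0))
    (n : ℕ → ℝ → ℝ → ℝ)
    (hsol : ∀ k, IsPosSolE Ω (range a ∪ range b) A K R (ε k) (n k))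
    (u : ℝ → ℝ)
    (hucont : ContinuousOn u (Icc (-A) A))
    (huconv : TendstoUniformlyOn
      (fun k (p : ℝ × ℝ) => ε k * Real.log (n k p.1 p.2))
      (fun p => u p.2) atTop (closure Ω ×ˢ Icc (-A) A)) :
    (∀ φ : ℝ × ℝ → ℝ, Continuous φ → (∀ p, 0 ≤ φ p) → HasCompactSupport φ →
      tsupport φ ⊆ Ω ×ˢ {θ ∈ Ioo (-A) A | u θ < 0} →
      Tendsto (fun k => ∫ x in Ω, ∫ θ in (-A)..A, φ (x, θ) * n k x θ) atTop (𝓝 0)) ∧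
    (∀ L : NNReal, LipschitzOnWith L u (Icc (-A) A) →
      (∀ θ ∈ Icc (-A) A, u θ ≤ 0) → (∃ θ ∈ Icc (-A) A, u θ = 0) →
      ∀ Lam : ℝ → ℝ, ContinuousOn Lam (Icc (-A) A) → IsViscSolInterior A Lam u →
      (∀ θ ∈ Icc (-A) A, 0 ≤ Lam θ) ∧
      (∀ θ₀ ∈ Ioo (-A) A, u θ₀ = 0 → Lam θ₀ = 0)) := by
  have hnpos : ∀ k, ∀ x ∈ closure Ω, ∀ θ ∈ Icc (-A) A, 0 < n k x θ :=
    fun k => (hsol k).2.1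
  constructor
  · intro φ hφc hφnn hφcs hsupp
    by_cases hS : tsupport φ = ∅
    · have hz : ∀ p, φ p = 0 := fun p =>
        image_eq_zero_of_notMem_tsupport (by simp [hS])
      have : ∀ k, (∫ x in Ω, ∫ θ in (-A)..A, φ (x, θ) * n k x θ) = 0 := by
        intro k
        have : ∀ x, (∫ θ in (-A)..A, φ (x, θ) * n k x θ) = 0 := by
          intro x; simp [hz]
        simp [this]
      simpa [this] using tendsto_const_nhds
    · -- main case
      have hSne : (tsupport φ).Nonempty := nonempty_iff_ne_empty.mpr hS
      obtain ⟨Cφ, hCφ⟩ := hφcs.exists_bound_of_continuous hφc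
      have hCφ0 : 0 ≤ Cφ := le_trans (norm_nonneg _) (hCφ (0, 0))
      have hSsub : tsupport φ ⊆ closure Ω ×ˢ Icc (-A) A := by
        intro p hp
        obtain ⟨h1, h2⟩ := hsupp hp
        exact ⟨subset_closure h1, Ioo_subset_Icc_self h2.1⟩
      -- maximum of u on the support
      have hcontS : ContinuousOn (fun p : ℝ × ℝ => u p.2) (tsupport φ) :=
        hucont.comp continuous_snd.continuousOn
          (fun p hp => Ioo_subset_Icc_self (hsupp hp).2.1)
      obtain ⟨p₀, hp₀S, hp₀max⟩ := hφcs.exists_isMaxOn hSne hcontS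
      set c : ℝ := -(u p₀.2) with hc_def
      have hc : 0 < c := by
        have := (hsupp hp₀S).2.2
        simp only [hc_def]; linarith
      have hub : ∀ p ∈ tsupport φ, u p.2 ≤ -c := fun p hp => by
        have h : u p.2 ≤ u p₀.2 := hp₀max hp
        simp only [hc_def]; linarith
      -- uniform convergence bound
      have hev : ∀ᶠ k in atTop, ∀ p ∈ closure Ω ×ˢ Icc (-A) A,
          dist (u p.2) (ε k * Real.log (n k p.1 p.2)) < c / 2 :=
        (Metric.tendstoUniformlyOn_iff.mp huconv) (c / 2) (by positivity)
      set M : ℕ → ℝ := fun k => Real.exp (-(c / 2) / ε k) with hM_def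
      have hMpos : ∀ k, 0 < M k := fun k => Real.exp_pos _
      have hΩmeas : MeasurableSet Ω := by
        rw [hΩ]; exact MeasurableSet.iUnion (fun i => measurableSet_Ioo)
      have hΩfin : volume Ω < ⊤ := by
        rw [hΩ]
        refine lt_of_le_of_lt (measure_iUnion_le _) ?_
        rw [tsum_fintype]
        refine ENNReal.sum_lt_top.mpr (fun i _ => ?_)
        rw [Real.volume_Ioo]; exact ENNReal.ofReal_lt_top
      -- key bound
      have hkey : ∀ᶠ k in atTop,
          ‖∫ x in Ω, ∫ θ in (-A)..A, φ (x, θ) * n k x θ‖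
            ≤ Cφ * M k * (2 * A) * (volume Ω).toReal := by
        filter_upwards [hev] with k hk
        refine norm_setIntegral_le_of_norm_le_const hΩfin (fun x hx => ?_)
        have hinner : ∀ θ ∈ Set.uIoc (-A) A, ‖φ (x, θ) * n k x θ‖ ≤ Cφ * M k := by
          intro θ hθ
          have hθIcc : θ ∈ Icc (-A) A := by
            rw [Set.uIoc_of_le (by linarith : -A ≤ A)] at hθ
            exact Ioc_subset_Icc_self hθ
          by_cases hmem : (x, θ) ∈ tsupport φ
          · have hple : n k x θ ≤ M k := by
              have hdist := hk (x, θ) (hSsub hmem)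
              have hu : u θ ≤ -c := hub (x, θ) hmem
              rw [Real.dist_eq] at hdist
              have h1 : ε k * Real.log (n k x θ) ≤ -(c / 2) := by
                have := abs_lt.mp hdist
                linarith [this.1]
              have h2 : Real.log (n k x θ) ≤ -(c / 2) / ε k := by
                rw [le_div_iff₀ (hεpos k)]; linarith [mul_comm (ε k) (Real.log (n k x θ))]
              have hpos := hnpos k x (subset_closure hx) θ hθIcc
              calc n k x θ = Real.exp (Real.log (n k x θ)) := (Real.exp_log hpos).symm
                _ ≤ M k := Real.exp_le_exp.mpr h2
            have hpos := hnpos k x (subset_closure hx) θ hθIcc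
            rw [Real.norm_eq_abs, abs_of_nonneg (mul_nonneg (hφnn _) hpos.le)]
            calc φ (x, θ) * n k x θ ≤ Cφ * n k x θ := by
                  refine mul_le_mul_of_nonneg_right ?_ hpos.le
                  calc φ (x, θ) ≤ |φ (x, θ)| := le_abs_self _
                    _ ≤ Cφ := hCφ (x, θ)
              _ ≤ Cφ * M k := mul_le_mul_of_nonneg_left hple hCφ0
          · have : φ (x, θ) = 0 := image_eq_zero_of_notMem_tsupport hmem
            rw [this]; simp only [zero_mul, norm_zero]
            positivity
        calc ‖∫ θ in (-A)..A, φ (x, θ) * n k x θ‖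
            ≤ Cφ * M k * |A - (-A)| :=
              intervalIntegral.norm_integral_le_of_norm_le_const hinner
          _ = Cφ * M k * (2 * A) := by rw [abs_of_nonneg (by linarith)]; ring_nf
      -- M k → 0
      have hMlim : Tendsto M atTop (𝓝 0) := by
        have hinv : Tendsto (fun k => (ε k)⁻¹) atTop atTop :=
          tendsto_inv_nhdsGT_zero.comp
            (tendsto_nhdsWithin_of_tendsto_nhds_of_eventually_within ε hεlim
              (Eventually.of_forall (fun k => hεpos k)))
        have h1 : Tendsto (fun k => -(c / 2) / ε k) atTop atBot := by
          have h2 : Tendsto (fun k => (c / 2) * (ε k)⁻¹) atTop atTop :=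
            hinv.const_mul_atTop (by positivity)
          have h3 : Tendsto (fun k => -((c / 2) * (ε k)⁻¹)) atTop atBot :=
            tendsto_neg_atTop_atBot.comp h2
          refine h3.congr (fun k => ?_)
          field_simp
        exact Real.tendsto_exp_atBot.comp h1
      refine squeeze_zero_norm' hkey ?_
      have := ((hMlim.const_mul Cφ).mul_const (2 * A)).mul_const (volume Ω).toReal
      simpa using this
  · intro L hLip hule humax Lam hLamCont hvisc
    obtain ⟨hsub, hsuper⟩ := hvisc
    have hIccNe : (Icc (-A) A).Nonempty := nonempty_Icc.mpr (by linarith)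
    have key : ∀ θs ∈ Ioo (-A) A, 0 ≤ Lam θs := by
      intro θs hθs
      have hθsIcc : θs ∈ Icc (-A) A := Ioo_subset_Icc_self hθs
      -- minimizers of u θ + (M+1) (θ - θs)^2
      have hmin : ∀ M : ℕ, ∃ θm ∈ Icc (-A) A,
          ∀ θ ∈ Icc (-A) A, u θm + ((M:ℝ)+1)*(θm - θs)^2 ≤ u θ + ((M:ℝ)+1)*(θ - θs)^2 := by
        intro M
        have hc : ContinuousOn (fun θ => u θ + ((M:ℝ)+1)*(θ - θs)^2) (Icc (-A) A) :=
          hucont.add (Continuous.continuousOn (by fun_prop))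
        obtain ⟨x, hx, hmin⟩ := isCompact_Icc.exists_isMinOn hIccNe hc
        exact ⟨x, hx, fun θ hθ => hmin hθ⟩
      choose θm hθmIcc hθmmin using hmin
      have hclose : ∀ M : ℕ, |θm M - θs| ≤ (L:ℝ) / ((M:ℝ)+1) := by
        intro M
        have h1 := hθmmin M θs hθsIcc
        have h2 : dist (u θs) (u (θm M)) ≤ (L:ℝ) * dist θs (θm M) :=
          hLip.dist_le_mul θs hθsIcc (θm M) (hθmIcc M)
        rw [Real.dist_eq, Real.dist_eq] at h2
        set t := θm M - θs with ht
        have habs : |θs - θm M| = |t| := by rw [ht, abs_sub_comm]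
        have h3 : ((M:ℝ)+1) * t^2 ≤ (L:ℝ) * |t| := by
          have := abs_le.mp (le_of_eq rfl : |u θs - u (θm M)| ≤ |u θs - u (θm M)|)
          have h4 : u θs - u (θm M) ≤ |u θs - u (θm M)| := le_abs_self _
          rw [habs] at h2
          nlinarith [h1, h4.trans h2]
        rcases eq_or_lt_of_le (abs_nonneg t) with h0 | h0
        · rw [← h0]; positivity
        · rw [le_div_iff₀ (by positivity)]
          nlinarith [sq_abs t]
      have hL0 : Tendsto (fun M : ℕ => (L:ℝ) / ((M:ℝ)+1)) atTop (𝓝 0) := by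
        have h := (tendsto_const_div_atTop_nhds_zero_nat (L:ℝ)).comp (tendsto_add_atTop_nat 1)
        have he : (fun M : ℕ => (L:ℝ)/((M:ℝ)+1)) = (fun M : ℕ => (L:ℝ)/(((M+1 : ℕ):ℝ))) := by
          funext M; push_cast; ring
        rw [he]; exact h
      have hthm : Tendsto θm atTop (𝓝 θs) := by
        rw [tendsto_iff_dist_tendsto_zero]
        refine squeeze_zero (fun M => dist_nonneg) (fun M => ?_) hL0
        rw [Real.dist_eq]; exact hclose M
      have hev : ∀ᶠ M : ℕ in atTop, 0 ≤ Lam (θm M) := by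
        filter_upwards [hthm.eventually (isOpen_Ioo.eventually_mem hθs)] with M hMIoo
        set φM : ℝ → ℝ := fun θ => -(((M:ℝ)+1)*(θ - θs)^2) with hφM
        have hcd : ContDiff ℝ 1 φM := by fun_prop
        have := hsuper φM hcd (θm M) hMIoo (fun θ hθ => by
          have := hθmmin M θ hθ; simp only [hφM]; linarith)
        nlinarith [this, sq_nonneg (deriv φM (θm M))]
      have hLc : Tendsto (fun M => Lam (θm M)) atTop (𝓝 (Lam θs)) :=
        ((hLamCont θs hθsIcc).tendsto).comp
          (tendsto_nhdsWithin_of_tendsto_nhds_of_eventually_within θm hthm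
            (Eventually.of_forall hθmIcc))
      exact ge_of_tendsto hLc hev
    constructor
    · intro θ hθ
      set s : ℕ → ℝ := fun n => θ - θ / ((n:ℝ)+2) with hs
      have habs : |θ| ≤ A := abs_le.mpr ⟨hθ.1, hθ.2⟩
      have hmem : ∀ n : ℕ, s n ∈ Ioo (-A) A := by
        intro n
        have h2 : (0:ℝ) < (n:ℝ)+2 := by positivity
        have : |s n| < A := by
          have h3 : s n = θ * (((n:ℝ)+1)/((n:ℝ)+2)) := by simp only [hs]; field_simp; ring
          rw [h3, abs_mul, abs_of_nonneg (by positivity : (0:ℝ) ≤ ((n:ℝ)+1)/((n:ℝ)+2))]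
          calc |θ| * (((n:ℝ)+1)/((n:ℝ)+2)) ≤ A * (((n:ℝ)+1)/((n:ℝ)+2)) :=
                mul_le_mul_of_nonneg_right habs (by positivity)
            _ < A * 1 := by
                apply mul_lt_mul_of_pos_left _ hA
                rw [div_lt_one h2]; linarith
            _ = A := mul_one A
        exact ⟨neg_lt_of_abs_lt this, lt_of_abs_lt this⟩
      have hslim : Tendsto s atTop (𝓝 θ) := by
        have h0 : Tendsto (fun n : ℕ => θ / ((n:ℝ)+2)) atTop (𝓝 0) := by
          have h := (tendsto_const_div_atTop_nhds_zero_nat θ).comp (tendsto_add_atTop_nat 2)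
          have he : (fun n : ℕ => θ/((n:ℝ)+2)) = (fun n : ℕ => θ/(((n+2 : ℕ):ℝ))) := by
            funext n; push_cast; ring
          rw [he]; exact h
        simpa using (tendsto_const_nhds (x := θ)).sub h0
      have hLc : Tendsto (fun n => Lam (s n)) atTop (𝓝 (Lam θ)) :=
        ((hLamCont θ hθ).tendsto).comp
          (tendsto_nhdsWithin_of_tendsto_nhds_of_eventually_within s hslim
            (Eventually.of_forall (fun n => Ioo_subset_Icc_self (hmem n))))
      exact ge_of_tendsto hLc (Eventually.of_forall (fun n => key (s n) (hmem n)))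
    · intro θ₀ hθ₀ hu0
      have h1 : Lam θ₀ ≤ 0 := by
        have := hsub (fun _ => 0) contDiff_const θ₀ hθ₀
          (fun θ hθ => by simpa [hu0] using hule θ hθ)
        simpa using this
      exact le_antisymm h1 (key θ₀ hθ₀)
end
end

section
/- Assume (H1)–(H3). For every ε > 0 and every positive solution n_ε of (E) with parameter ε, the total density ρ_ε(x) = ∫_{−A}^{A} n_ε(x, θ) dθ satisfies 0 < ρ_ε(x) ≤ C_R for all x ∈ closure(Ω). Moreover there exists a constant C > 0, depending only on C_R, C_K, A and |Ω| (and not on ε), such that |ρ_ε″(x)| ≤ C and |ρ_ε′(x)| ≤ C for all x ∈ Ω. -/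
open MeasureTheory Set Real Filter Topology

noncomputable section

lemma hasDerivAt_pdx {n : ℝ → ℝ → ℝ} (hn : ContDiff ℝ 1 (Function.uncurry n)) (x θ : ℝ) :
    HasDerivAt (fun x' => n x' θ) (fderiv ℝ (Function.uncurry n) (x, θ) (1, 0)) x := by
  have h1 : HasDerivAt (fun x' : ℝ => ((x', θ) : ℝ × ℝ)) ((1 : ℝ), (0 : ℝ)) x :=
    (hasDerivAt_id x).prodMk (hasDerivAt_const x θ)
  have h2 : HasFDerivAt (Function.uncurry n) (fderiv ℝ (Function.uncurry n) (x, θ)) (x, θ) :=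
    (hn.differentiable one_ne_zero (x, θ)).hasFDerivAt
  exact h2.comp_hasDerivAt x h1

lemma hasDerivAt_pdt {n : ℝ → ℝ → ℝ} (hn : ContDiff ℝ 1 (Function.uncurry n)) (x θ : ℝ) :
    HasDerivAt (fun θ' => n x θ') (fderiv ℝ (Function.uncurry n) (x, θ) (0, 1)) θ := by
  have h1 : HasDerivAt (fun θ' : ℝ => ((x, θ') : ℝ × ℝ)) ((0 : ℝ), (1 : ℝ)) θ :=
    (hasDerivAt_const θ x).prodMk (hasDerivAt_id θ)
  have h2 : HasFDerivAt (Function.uncurry n) (fderiv ℝ (Function.uncurry n) (x, θ)) (x, θ) :=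
    (hn.differentiable one_ne_zero (x, θ)).hasFDerivAt
  exact h2.comp_hasDerivAt θ h1

lemma pdx_eq {n : ℝ → ℝ → ℝ} (hn : ContDiff ℝ 1 (Function.uncurry n)) (x θ : ℝ) :
    pdx n x θ = fderiv ℝ (Function.uncurry n) (x, θ) (1, 0) :=
  (hasDerivAt_pdx hn x θ).deriv

lemma pdt_eq {n : ℝ → ℝ → ℝ} (hn : ContDiff ℝ 1 (Function.uncurry n)) (x θ : ℝ) :
    pdt n x θ = fderiv ℝ (Function.uncurry n) (x, θ) (0, 1) :=
  (hasDerivAt_pdt hn x θ).deriv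

lemma contDiff_pdx {n : ℝ → ℝ → ℝ} (hn : ContDiff ℝ 2 (Function.uncurry n)) :
    ContDiff ℝ 1 (Function.uncurry (pdx n)) := by
  have h : Function.uncurry (pdx n) = fun p : ℝ × ℝ => fderiv ℝ (Function.uncurry n) p ((1 : ℝ), (0 : ℝ)) := by
    funext p
    exact pdx_eq (hn.of_le (by norm_num)) p.1 p.2
  rw [h]
  exact (hn.fderiv_right (by norm_num)).clm_apply contDiff_const

lemma contDiff_pdt {n : ℝ → ℝ → ℝ} (hn : ContDiff ℝ 2 (Function.uncurry n)) :
    ContDiff ℝ 1 (Function.uncurry (pdt n)) := by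
  have h : Function.uncurry (pdt n) = fun p : ℝ × ℝ => fderiv ℝ (Function.uncurry n) p ((0 : ℝ), (1 : ℝ)) := by
    funext p
    exact pdt_eq (hn.of_le (by norm_num)) p.1 p.2
  rw [h]
  exact (hn.fderiv_right (by norm_num)).clm_apply contDiff_const

lemma continuous_pdx {n : ℝ → ℝ → ℝ} (hn : ContDiff ℝ 1 (Function.uncurry n)) :
    Continuous (Function.uncurry (pdx n)) := by
  have h : Function.uncurry (pdx n) = fun p : ℝ × ℝ => fderiv ℝ (Function.uncurry n) p ((1 : ℝ), (0 : ℝ)) := by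
    funext p
    exact pdx_eq hn p.1 p.2
  rw [h]
  exact ((hn.fderiv_right (m := 0) (by norm_num)).clm_apply contDiff_const).continuous

lemma continuous_pdt {n : ℝ → ℝ → ℝ} (hn : ContDiff ℝ 1 (Function.uncurry n)) :
    Continuous (Function.uncurry (pdt n)) := by
  have h : Function.uncurry (pdt n) = fun p : ℝ × ℝ => fderiv ℝ (Function.uncurry n) p ((0 : ℝ), (1 : ℝ)) := by
    funext p
    exact pdt_eq hn p.1 p.2
  rw [h]
  exact ((hn.fderiv_right (m := 0) (by norm_num)).clm_apply contDiff_const).continuous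

lemma hasDerivAt_param {F : ℝ → ℝ → ℝ} (hF : ContDiff ℝ 1 (Function.uncurry F))
    {A : ℝ} (hA : 0 < A) (x₀ : ℝ) :
    HasDerivAt (fun x => ∫ θ in (-A)..A, F x θ) (∫ θ in (-A)..A, pdx F x₀ θ) x₀ := by
  have hFc : Continuous (Function.uncurry F) := hF.continuous
  have hcur : ∀ x : ℝ, Continuous (F x) := fun x =>
    hFc.comp (continuous_const.prodMk continuous_id)
  have hpdxc : Continuous (Function.uncurry (pdx F)) := continuous_pdx hF
  obtain ⟨M, hM⟩ := ((isCompact_Icc (a := x₀ - 1) (b := x₀ + 1)).prod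
      (isCompact_Icc (a := -A) (b := A))).exists_bound_of_continuousOn hpdxc.continuousOn
  refine (intervalIntegral.hasDerivAt_integral_of_dominated_loc_of_deriv_le
      (F := F) (F' := pdx F) (x₀ := x₀) (bound := fun _ => M) (s := Metric.ball x₀ 1) (Metric.ball_mem_nhds x₀ one_pos)
      (Eventually.of_forall fun x => (hcur x).aestronglyMeasurable)
      ((hcur x₀).intervalIntegrable _ _)
      ((hpdxc.comp (continuous_const.prodMk continuous_id)).aestronglyMeasurable)
      (ae_of_all _ fun θ hθ x hx => ?_)
      (intervalIntegrable_const)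
      (ae_of_all _ fun θ hθ x hx => ?_)).2
  · have hθ' : θ ∈ Icc (-A) A := by
      rw [uIoc_of_le (by linarith : -A ≤ A)] at hθ
      exact Ioc_subset_Icc_self hθ
    have hx' : x ∈ Icc (x₀ - 1) (x₀ + 1) := by
      have := Metric.mem_ball.1 hx
      rw [Real.dist_eq] at this
      constructor <;> [linarith [abs_lt.1 this |>.1]; linarith [abs_lt.1 this |>.2]]
    exact hM ((x, θ)) ⟨hx', hθ'⟩
  · have := hasDerivAt_pdx hF x θ
    rwa [← pdx_eq hF x θ] at this

lemma continuous_param_setIntegral {F : ℝ → ℝ → ℝ} (hF : Continuous (Function.uncurry F))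
    {s T : Set ℝ} (hs : MeasurableSet s) (hT : IsCompact T) (hsT : s ⊆ T) :
    Continuous fun x => ∫ y in s, F x y := by
  rw [continuous_iff_continuousAt]
  intro x₀
  obtain ⟨M, hM⟩ := ((isCompact_Icc (a := x₀ - 1) (b := x₀ + 1)).prod
      hT).exists_bound_of_continuousOn hF.continuousOn
  have hsfin : volume s < ⊤ := (measure_mono hsT).trans_lt hT.measure_lt_top
  refine continuousAt_of_dominated (bound := fun _ => M)
    (Eventually.of_forall fun x =>
      ((hF.comp (continuous_const.prodMk continuous_id)).aestronglyMeasurable)) ?_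
    ((integrableOn_const hsfin.ne))
    (ae_of_all _ fun y => (hF.comp (continuous_id.prodMk continuous_const)).continuousAt)
  · filter_upwards [Icc_mem_nhds (by linarith : x₀ - 1 < x₀) (by linarith : x₀ < x₀ + 1)] with x hx
    refine (ae_restrict_iff' hs).2 (ae_of_all _ fun y hy => ?_)
    exact hM (x, y) ⟨hx, hsT hy⟩

lemma continuous_param_intervalIntegral {F : ℝ → ℝ → ℝ} (hF : Continuous (Function.uncurry F))
    {A : ℝ} (hA : 0 < A) :
    Continuous fun x => ∫ θ in (-A)..A, F x θ := by
  have h : (fun x => ∫ θ in (-A)..A, F x θ) = fun x => ∫ θ in Ioc (-A) A, F x θ :=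
    funext fun x => intervalIntegral.integral_of_le (by linarith)
  rw [h]
  exact continuous_param_setIntegral hF measurableSet_Ioc isCompact_Icc Ioc_subset_Icc_self

lemma main_est (m : ℕ) (a b : Fin (m + 1) → ℝ) (Ω : Set ℝ)
    (hab : ∀ i, a i < b i)
    (hord : ∀ i j : Fin (m + 1), i < j → b i < a j)
    (hΩ : Ω = ⋃ i, Ioo (a i) (b i))
    (A : ℝ) (hA : 0 < A)
    (R : ℝ → ℝ → ℝ) (C_R : ℝ)
    (hRsmooth : ContDiff ℝ 1 (Function.uncurry R))
    (hRbound : ∀ x ∈ closure Ω, ∀ θ ∈ Icc (-A) A,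
      |R x θ| ≤ C_R ∧ |pdx R x θ| ≤ C_R ∧ |pdt R x θ| ≤ C_R)
    (K : ℝ → ℝ) (c_K C_K : ℝ)
    (hKsmooth : ContDiff ℝ 1 K)
    (hcK : 0 < c_K)
    (hKbound : ∀ x, c_K ≤ K x ∧ K x ≤ C_K ∧ |deriv K x| ≤ C_K)
    (ε : ℝ) (n : ℝ → ℝ → ℝ)
    (hsol : IsPosSolE Ω (range a ∪ range b) A K R ε n) :
    (∀ x ∈ closure Ω, 0 < rhoTot A n x ∧ rhoTot A n x ≤ C_R) ∧
    (∀ x ∈ Ω,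
      |deriv (deriv (rhoTot A n)) x|
        ≤ (2 * C_R * C_K * (volume Ω).toReal + 2 * C_R ^ 2) * ((∑ i, (b i - a i)) + 1) ∧
      |deriv (rhoTot A n) x|
        ≤ (2 * C_R * C_K * (volume Ω).toReal + 2 * C_R ^ 2) * ((∑ i, (b i - a i)) + 1)) := by
  obtain ⟨hC2, hpos, hEq, hNx, hNθ⟩ := hsol
  have hA' : -A ≤ A := by linarith
  have hAA : -A < A := by linarith
  set ρ := rhoTot A n with hρdef
  -- geometry of Ω
  have hΩopen : IsOpen Ω := by
    rw [hΩ]; exact isOpen_iUnion fun i => isOpen_Ioo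
  have hΩmeas : MeasurableSet Ω := hΩopen.measurableSet
  have ha0 : ∀ i, a 0 ≤ a i := by
    intro i
    rcases eq_or_ne i 0 with h | h
    · rw [h]
    · have : (0 : Fin (m + 1)) < i := Fin.pos_of_ne_zero h
      linarith [hord 0 i this, hab 0]
  have hbl : ∀ i, b i ≤ b (Fin.last m) := by
    intro i
    rcases eq_or_ne i (Fin.last m) with h | h
    · rw [h]
    · have : i < Fin.last m := lt_of_le_of_ne (Fin.le_last i) h
      linarith [hord i (Fin.last m) this, hab (Fin.last m)]
  set T : Set ℝ := Icc (a 0) (b (Fin.last m)) with hTdef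
  have hTcomp : IsCompact T := isCompact_Icc
  have hΩT : Ω ⊆ T := by
    rw [hΩ]
    refine iUnion_subset fun i x hx => ⟨?_, ?_⟩
    · have := hx.1; have := ha0 i; linarith
    · have := hx.2; have := hbl i; linarith
  have hclT : closure Ω ⊆ T := closure_minimal hΩT isClosed_Icc
  have hIccCl : ∀ i, Icc (a i) (b i) ⊆ closure Ω := by
    intro i
    rw [← closure_Ioo (hab i).ne]
    exact closure_mono (by rw [hΩ]; exact subset_iUnion (fun j => Ioo (a j) (b j)) i)
  have hclsub : closure Ω ⊆ ⋃ i, Icc (a i) (b i) := by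
    refine closure_minimal ?_ (isClosed_iUnion_of_finite fun i => isClosed_Icc)
    rw [hΩ]; exact iUnion_mono fun i => Ioo_subset_Icc_self
  have hμΩ : volume Ω < ⊤ := (measure_mono hΩT).trans_lt hTcomp.measure_lt_top
  -- smoothness package
  have hn1 : ContDiff ℝ 1 (Function.uncurry n) := hC2.of_le (by norm_num)
  have hnc : Continuous (Function.uncurry n) := hC2.continuous
  have hncur : ∀ x, Continuous (n x) := fun x =>
    hnc.comp (continuous_const.prodMk continuous_id)
  have hKc : Continuous K := hKsmooth.continuous
  have hpdx1 : ContDiff ℝ 1 (Function.uncurry (pdx n)) := contDiff_pdx hC2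
  have hpdt1 : ContDiff ℝ 1 (Function.uncurry (pdt n)) := contDiff_pdt hC2
  have hpdxxc : Continuous (Function.uncurry (pdx (pdx n))) := continuous_pdx hpdx1
  have hpdttc : Continuous (Function.uncurry (pdt (pdt n))) := continuous_pdt hpdt1
  set φ : ℝ → ℝ := fun x => ∫ θ in (-A)..A, pdx n x θ with hφdef
  set ψ : ℝ → ℝ := fun x => ∫ θ in (-A)..A, pdx (pdx n) x θ with hψdef
  have hρ' : ∀ x, HasDerivAt ρ (φ x) x := fun x => hasDerivAt_param hn1 hA x
  have hφ' : ∀ x, HasDerivAt φ (ψ x) x := fun x => hasDerivAt_param hpdx1 hA x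
  have hderivρ : deriv ρ = φ := funext fun x => (hρ' x).deriv
  have hρc : Continuous ρ := by
    have : Differentiable ℝ ρ := fun x => (hρ' x).differentiableAt
    exact this.continuous
  have hφc : Continuous φ := by
    have : Differentiable ℝ φ := fun x => (hφ' x).differentiableAt
    exact this.continuous
  have hψc : Continuous ψ := continuous_param_intervalIntegral hpdxxc hA
  -- positivity of ρ on closure Ω
  have hρpos : ∀ x ∈ closure Ω, 0 < ρ x := by
    intro x hx
    refine intervalIntegral.intervalIntegral_pos_of_pos_on ((hncur x).intervalIntegrable _ _) ?_ hAA
    exact fun θ hθ => hpos x hx θ (Ioo_subset_Icc_self hθ)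
  -- Neumann for φ
  have hφEndp : ∀ x ∈ range a ∪ range b, φ x = 0 := by
    intro x hx
    have heq : EqOn (fun θ => pdx n x θ) (fun _ => (0 : ℝ)) (uIcc (-A) A) := by
      intro θ hθ
      rw [uIcc_of_le hA'] at hθ
      exact hNx x hx θ hθ
    simp only [hφdef]
    rw [intervalIntegral.integral_congr heq]
    simp
  -- decomposition of nlL
  set W : ℝ → ℝ := fun x => ∫ y in Ω, K (x - y) with hWdef
  have hintOn : ∀ f : ℝ → ℝ, Continuous f → IntegrableOn f Ω := fun f hf =>
    (hf.continuousOn.integrableOn_compact hTcomp).mono_set hΩT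
  have hintK : ∀ x, IntegrableOn (fun y => K (x - y)) Ω := fun x =>
    hintOn _ (hKc.comp (continuous_const.sub continuous_id))
  have hintnK : ∀ x θ, IntegrableOn (fun y => n y θ * K (x - y)) Ω := fun x θ =>
    hintOn _ (((hnc.comp (continuous_id.prodMk continuous_const))).mul
      (hKc.comp (continuous_const.sub continuous_id)))
  have hintρK : ∀ x, IntegrableOn (fun y => ρ y * K (x - y)) Ω := fun x =>
    hintOn _ ((hρc).mul (hKc.comp (continuous_const.sub continuous_id)))
  have hnlL : ∀ x θ, nlL Ω K n x θ = n x θ * W x - (∫ y in Ω, n y θ * K (x - y)) := by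
    intro x θ
    have h1 : ∀ y : ℝ, (n x θ - n y θ) * K (x - y)
        = n x θ * K (x - y) - n y θ * K (x - y) := fun y => by ring
    simp only [nlL, h1]
    rw [integral_sub ((hintK x).const_mul _) (hintnK x θ), MeasureTheory.integral_const_mul, hWdef]
  -- continuity of the pieces
  have hWc : Continuous W := by
    refine continuous_param_setIntegral (F := fun x y => K (x - y)) ?_ hΩmeas hTcomp hΩT
    exact hKc.comp (continuous_fst.sub continuous_snd)
  have hρKc : Continuous fun x => ∫ y in Ω, ρ y * K (x - y) := by
    refine continuous_param_setIntegral (F := fun x y => ρ y * K (x - y)) ?_ hΩmeas hTcomp hΩT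
    exact (hρc.comp continuous_snd).mul (hKc.comp (continuous_fst.sub continuous_snd))
  set Λ : ℝ → ℝ := fun x => ρ x * W x - ∫ y in Ω, ρ y * K (x - y) with hΛdef
  set g : ℝ → ℝ := fun x => ∫ θ in (-A)..A, n x θ * (R x θ - ρ x) with hgdef
  have hΛc : Continuous Λ := (hρc.mul hWc).sub hρKc
  have hgc : Continuous g := by
    refine continuous_param_intervalIntegral (F := fun x θ => n x θ * (R x θ - ρ x)) ?_ hA
    exact hnc.mul (hRsmooth.continuous.sub (hρc.comp continuous_fst))
  -- Fubini
  have hfub : ∀ x, (∫ θ in (-A)..A, ∫ y in Ω, n y θ * K (x - y))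
      = ∫ y in Ω, ρ y * K (x - y) := by
    intro x
    rw [intervalIntegral.integral_of_le hA']
    have hcont : Continuous (Function.uncurry fun (θ y : ℝ) => n y θ * K (x - y)) := by
      exact ((hnc.comp (continuous_snd.prodMk continuous_fst))).mul
        (hKc.comp (continuous_const.sub continuous_snd))
    obtain ⟨M, hM⟩ := ((isCompact_Icc (a := -A) (b := A)).prod hTcomp).exists_bound_of_continuousOn
      hcont.continuousOn
    have hint : Integrable (Function.uncurry fun (θ y : ℝ) => n y θ * K (x - y))
        ((volume.restrict (Ioc (-A) A)).prod (volume.restrict Ω)) := by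
      rw [Measure.prod_restrict]
      have hfin : (volume.prod volume) (Ioc (-A) A ×ˢ Ω) < ⊤ := by
        rw [Measure.prod_prod]
        exact ENNReal.mul_lt_top measure_Ioc_lt_top hμΩ
      refine Integrable.mono' (g := fun _ => M)
        ((integrableOn_const (μ := volume.prod volume) (s := Ioc (-A) A ×ˢ Ω) (C := M)
          hfin.ne)) hcont.aestronglyMeasurable ?_
      refine (ae_restrict_iff' (measurableSet_Ioc.prod hΩmeas)).2 (ae_of_all _ fun p hp => ?_)
      exact hM p ⟨Ioc_subset_Icc_self hp.1, hΩT hp.2⟩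
    have hswap := integral_integral_swap hint
    rw [hswap]
    refine setIntegral_congr_fun hΩmeas fun y _ => ?_
    rw [integral_mul_const]
    congr 1
    rw [hρdef]
    show (∫ θ in Ioc (-A) A, n y θ) = rhoTot A n y
    rw [rhoTot, intervalIntegral.integral_of_le hA']
  -- key integrated identity on Ω
  have hkeyΩ : ∀ x ∈ Ω, ψ x = Λ x - g x := by
    intro x hx
    have hVxc : Continuous fun θ => ∫ y in Ω, n y θ * K (x - y) := by
      refine continuous_param_setIntegral (F := fun θ y => n y θ * K (x - y)) ?_ hΩmeas hTcomp hΩT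
      exact ((hnc.comp (continuous_snd.prodMk continuous_fst))).mul
        (hKc.comp (continuous_const.sub continuous_snd))
    have hic1 : Continuous fun θ => pdt (pdt n) x θ :=
      hpdttc.comp (continuous_const.prodMk continuous_id)
    have hic2 : Continuous fun θ => n x θ * W x - (∫ y in Ω, n y θ * K (x - y)) :=
      ((hncur x).mul continuous_const).sub hVxc
    have hic3 : Continuous fun θ => n x θ * (R x θ - ρ x) :=
      (hncur x).mul ((hRsmooth.continuous.comp (continuous_const.prodMk continuous_id)).sub
        continuous_const)
    have hptwise : ∀ θ ∈ Ioo (-A) A, pdx (pdx n) x θ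
        = (-ε ^ 2 * pdt (pdt n) x θ
            + (n x θ * W x - (∫ y in Ω, n y θ * K (x - y))))
          - n x θ * (R x θ - ρ x) := by
      intro θ hθ
      have h := hEq x hx θ hθ
      rw [hnlL x θ] at h
      linarith
    have hae : ∀ᵐ θ : ℝ, θ ∈ Set.uIoc (-A) A → pdx (pdx n) x θ
        = (-ε ^ 2 * pdt (pdt n) x θ
            + (n x θ * W x - (∫ y in Ω, n y θ * K (x - y))))
          - n x θ * (R x θ - ρ x) := by
      have hne : ∀ᵐ θ : ℝ, θ ≠ A := by
        have hset : {θ : ℝ | ¬θ ≠ A} = {A} := by ext t; simp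
        rw [ae_iff, hset]
        exact measure_singleton A
      filter_upwards [hne] with θ hθne hθ
      rw [uIoc_of_le hA'] at hθ
      exact hptwise θ ⟨hθ.1, lt_of_le_of_ne hθ.2 hθne⟩
    have hψeq : ψ x = ∫ θ in (-A)..A,
        ((-ε ^ 2 * pdt (pdt n) x θ
            + (n x θ * W x - (∫ y in Ω, n y θ * K (x - y))))
          - n x θ * (R x θ - ρ x)) := by
      rw [hψdef]
      exact intervalIntegral.integral_congr_ae hae
    have hFTC : (∫ θ in (-A)..A, pdt (pdt n) x θ) = pdt n x A - pdt n x (-A) := by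
      have hd : (fun θ => pdt (pdt n) x θ) = deriv (fun θ' => pdt n x θ') := by
        funext θ; rfl
      rw [hd]
      refine intervalIntegral.integral_deriv_eq_sub (fun t _ => ?_) ?_
      · exact (hasDerivAt_pdt hpdt1 x t).differentiableAt
      · rw [← hd]; exact hic1.intervalIntegrable _ _
    have hNθ' := hNθ x (subset_closure hx)
    rw [hψeq, intervalIntegral.integral_sub ((((hic1.intervalIntegrable _ _).const_mul _)).add
        (hic2.intervalIntegrable _ _)) (hic3.intervalIntegrable _ _),
      intervalIntegral.integral_add ((hic1.intervalIntegrable _ _).const_mul _)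
        (hic2.intervalIntegrable _ _),
      intervalIntegral.integral_const_mul, hFTC, hNθ'.1, hNθ'.2,
      intervalIntegral.integral_sub (((hncur x).intervalIntegrable _ _).mul_const _)
        (hVxc.intervalIntegrable _ _),
      intervalIntegral.integral_mul_const, hfub x]
    rw [hΛdef, hgdef]
    show -ε ^ 2 * (0 - 0) + ((∫ θ in (-A)..A, n x θ) * W x - ∫ y in Ω, ρ y * K (x - y))
        - (∫ θ in (-A)..A, n x θ * (R x θ - ρ x))
      = (ρ x * W x - ∫ y in Ω, ρ y * K (x - y)) - ∫ θ in (-A)..A, n x θ * (R x θ - ρ x)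
    have : (∫ θ in (-A)..A, n x θ) = ρ x := rfl
    rw [this]; ring
  have hkey : ∀ x ∈ closure Ω, ψ x = Λ x - g x := by
    have hcl : closure Ω ⊆ {x | ψ x = Λ x - g x} :=
      closure_minimal (fun y hy => hkeyΩ y hy) (isClosed_eq hψc (hΛc.sub hgc))
    exact fun x hx => hcl hx
  -- Λ as a single integral
  have hΛeq : ∀ x, Λ x = ∫ y in Ω, (ρ x - ρ y) * K (x - y) := by
    intro x
    have h1 : ∀ y : ℝ, (ρ x - ρ y) * K (x - y)
        = ρ x * K (x - y) - ρ y * K (x - y) := fun y => by ring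
    simp only [hΛdef, h1]
    rw [integral_sub ((hintK x).const_mul _) (hintρK x), MeasureTheory.integral_const_mul, hWdef]
  -- maximum point
  obtain ⟨xs, hxscl, hxsmax⟩ :=
    (hTcomp.of_isClosed_subset isClosed_closure hclT).exists_isMaxOn
      ⟨a 0, hIccCl 0 ⟨le_refl _, (hab 0).le⟩⟩ hρc.continuousOn
  obtain ⟨i, hxsi⟩ := mem_iUnion.1 (hclsub hxscl)
  have hφxs : φ xs = 0 := by
    by_cases hint : xs ∈ Ioo (a i) (b i)
    · have hxsΩ : xs ∈ Ω := by rw [hΩ]; exact mem_iUnion.2 ⟨i, hint⟩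
      have hlm : IsLocalMax ρ xs :=
        hxsmax.isLocalMax (mem_of_superset (hΩopen.mem_nhds hxsΩ) subset_closure)
      have := hlm.deriv_eq_zero
      rwa [hderivρ] at this
    · have hend : xs = a i ∨ xs = b i := by
        rcases eq_or_lt_of_le hxsi.1 with h | h
        · exact Or.inl h.symm
        rcases eq_or_lt_of_le hxsi.2 with h' | h'
        · exact Or.inr h'
        · exact absurd ⟨h, h'⟩ hint
      apply hφEndp
      rcases hend with h | h
      · exact Or.inl ⟨i, h.symm⟩
      · exact Or.inr ⟨i, h.symm⟩
  have hψxs : ψ xs ≤ 0 := by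
    by_contra hcon
    push_neg at hcon
    have hopen : IsOpen {t : ℝ | 0 < ψ t} := isOpen_lt continuous_const hψc
    obtain ⟨r, hr, hball⟩ := Metric.isOpen_iff.1 hopen xs hcon
    rcases lt_or_eq_of_le hxsi.2 with hlt | heq
    · -- xs < b i : move right
      set δ := min (r / 2) (b i - xs) with hδdef
      have hδpos : 0 < δ := lt_min (by linarith) (by linarith)
      have hδr : δ ≤ r / 2 := min_le_left _ _
      have hδb : δ ≤ b i - xs := min_le_right _ _
      have hsub : Icc xs (xs + δ) ⊆ Icc (a i) (b i) := fun t ht =>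
        ⟨le_trans hxsi.1 ht.1, by linarith [ht.2]⟩
      have hballsub : Icc xs (xs + δ) ⊆ Metric.ball xs r := by
        intro t ht
        rw [Metric.mem_ball, Real.dist_eq, abs_lt]
        constructor
        · linarith [ht.1]
        · linarith [ht.2]
      have hψpos : ∀ t ∈ Icc xs (xs + δ), 0 < ψ t := fun t ht => hball (hballsub ht)
      have hφmono : StrictMonoOn φ (Icc xs (xs + δ)) := by
        refine strictMonoOn_of_deriv_pos (convex_Icc _ _) hφc.continuousOn fun t ht => ?_
        rw [interior_Icc] at ht
        rw [(hφ' t).deriv]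
        exact hψpos t (Ioo_subset_Icc_self ht)
      have hφpos : ∀ t ∈ interior (Icc xs (xs + δ)), 0 < deriv ρ t := by
        intro t ht
        rw [interior_Icc] at ht
        rw [hderivρ]
        have h0 := hφmono ⟨le_refl xs, by linarith⟩ (Ioo_subset_Icc_self ht) ht.1
        rwa [hφxs] at h0
      have hρmono : StrictMonoOn ρ (Icc xs (xs + δ)) :=
        strictMonoOn_of_deriv_pos (convex_Icc _ _) hρc.continuousOn hφpos
      have hlt2 : ρ xs < ρ (xs + δ) :=
        hρmono ⟨le_refl _, by linarith⟩ ⟨by linarith, le_refl _⟩ (by linarith)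
      have hle2 : ρ (xs + δ) ≤ ρ xs := hxsmax (hIccCl i (hsub ⟨by linarith, le_refl _⟩))
      linarith
    · -- xs = b i : move left
      have haxs : a i < xs := heq ▸ hab i
      set δ := min (r / 2) (xs - a i) with hδdef
      have hδpos : 0 < δ := lt_min (by linarith) (by linarith)
      have hδr : δ ≤ r / 2 := min_le_left _ _
      have hδa : δ ≤ xs - a i := min_le_right _ _
      have hsub : Icc (xs - δ) xs ⊆ Icc (a i) (b i) := fun t ht =>
        ⟨by linarith [ht.1], le_trans ht.2 hxsi.2⟩
      have hballsub : Icc (xs - δ) xs ⊆ Metric.ball xs r := by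
        intro t ht
        rw [Metric.mem_ball, Real.dist_eq, abs_lt]
        constructor
        · linarith [ht.1]
        · linarith [ht.2]
      have hψpos : ∀ t ∈ Icc (xs - δ) xs, 0 < ψ t := fun t ht => hball (hballsub ht)
      have hφmono : StrictMonoOn φ (Icc (xs - δ) xs) := by
        refine strictMonoOn_of_deriv_pos (convex_Icc _ _) hφc.continuousOn fun t ht => ?_
        rw [interior_Icc] at ht
        rw [(hφ' t).deriv]
        exact hψpos t (Ioo_subset_Icc_self ht)
      have hφneg : ∀ t ∈ interior (Icc (xs - δ) xs), deriv ρ t < 0 := by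
        intro t ht
        rw [interior_Icc] at ht
        rw [hderivρ]
        have h0 := hφmono (Ioo_subset_Icc_self ht) ⟨by linarith, le_refl _⟩ ht.2
        rwa [hφxs] at h0
      have hρanti : StrictAntiOn ρ (Icc (xs - δ) xs) :=
        strictAntiOn_of_deriv_neg (convex_Icc _ _) hρc.continuousOn hφneg
      have hlt2 : ρ xs < ρ (xs - δ) :=
        hρanti ⟨le_refl _, by linarith⟩ ⟨by linarith, le_refl _⟩ (by linarith)
      have hle2 : ρ (xs - δ) ≤ ρ xs := hxsmax (hIccCl i (hsub ⟨le_refl _, by linarith⟩))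
      linarith
  -- conclusion of part 1
  have hΛnonneg : 0 ≤ Λ xs := by
    rw [hΛeq xs]
    refine setIntegral_nonneg hΩmeas fun y hy => ?_
    exact mul_nonneg (sub_nonneg.2 (hxsmax (subset_closure hy)))
      (le_of_lt (lt_of_lt_of_le hcK (hKbound _).1))
  have hgnn : 0 ≤ g xs := by
    have := hkey xs hxscl
    linarith
  have hintg1 : IntervalIntegrable (fun θ => n xs θ * (R xs θ - ρ xs)) volume (-A) A :=
    ((hncur xs).mul ((hRsmooth.continuous.comp
      (continuous_const.prodMk continuous_id)).sub continuous_const)).intervalIntegrable _ _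
  have hintg2 : IntervalIntegrable (fun θ => n xs θ * (C_R - ρ xs)) volume (-A) A :=
    ((hncur xs).mul continuous_const).intervalIntegrable _ _
  have hgle : g xs ≤ ρ xs * (C_R - ρ xs) := by
    have h1 : g xs ≤ ∫ θ in (-A)..A, n xs θ * (C_R - ρ xs) := by
      rw [hgdef]
      refine intervalIntegral.integral_mono_on hA' hintg1 hintg2 fun θ hθ => ?_
      have hR := (abs_le.1 (hRbound xs hxscl θ hθ).1).2
      have hn0 := (hpos xs hxscl θ hθ).le
      exact mul_le_mul_of_nonneg_left (by linarith) hn0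
    have h2 : (∫ θ in (-A)..A, n xs θ * (C_R - ρ xs)) = ρ xs * (C_R - ρ xs) := by
      rw [intervalIntegral.integral_mul_const]
      have : (∫ θ in (-A)..A, n xs θ) = ρ xs := rfl
      rw [this, mul_comm]
    linarith
  have hρxsle : ρ xs ≤ C_R := by nlinarith [hρpos xs hxscl]
  have part1 : ∀ x ∈ closure Ω, 0 < ρ x ∧ ρ x ≤ C_R := fun x hx =>
    ⟨hρpos x hx, le_trans (hxsmax hx) hρxsle⟩
  refine ⟨part1, ?_⟩
  -- part 2
  have hCRnn : 0 ≤ C_R :=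
    le_trans (abs_nonneg _)
      (hRbound (a 0) (hIccCl 0 ⟨le_refl _, (hab 0).le⟩) 0 ⟨by linarith, by linarith⟩).1
  have hCKpos : 0 < C_K := lt_of_lt_of_le hcK (le_trans (le_refl _) ((hKbound 0).1.trans (hKbound 0).2.1))
  have hμΩnn : 0 ≤ (volume Ω).toReal := ENNReal.toReal_nonneg
  set C₂ : ℝ := 2 * C_R * C_K * (volume Ω).toReal + 2 * C_R ^ 2 with hC₂def
  have hC₂nn : 0 ≤ C₂ := by
    have h1 : 0 ≤ 2 * C_R * C_K * (volume Ω).toReal :=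
      mul_nonneg (mul_nonneg (by linarith) hCKpos.le) hμΩnn
    have h2 : 0 ≤ 2 * C_R ^ 2 := by positivity
    linarith
  have hSnn : 0 ≤ ∑ j, (b j - a j) :=
    Finset.sum_nonneg fun j _ => by linarith [hab j]
  -- second derivative bound on closure Ω
  have hψbd : ∀ x ∈ closure Ω, |ψ x| ≤ C₂ := by
    intro x hx
    have h1 : |Λ x| ≤ 2 * C_R * C_K * (volume Ω).toReal := by
      rw [hΛeq x]
      have hb : ∀ y ∈ Ω, ‖(ρ x - ρ y) * K (x - y)‖ ≤ 2 * C_R * C_K := by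
        intro y hy
        rw [Real.norm_eq_abs, abs_mul]
        have hKpos : 0 < K (x - y) := lt_of_lt_of_le hcK (hKbound _).1
        have hKb : |K (x - y)| ≤ C_K := by
          rw [abs_of_pos hKpos]; exact (hKbound _).2.1
        have hx1 := part1 x hx
        have hy1 := part1 y (subset_closure hy)
        have hd : |ρ x - ρ y| ≤ 2 * C_R := abs_le.2 ⟨by linarith, by linarith⟩
        calc |ρ x - ρ y| * |K (x - y)| ≤ (2 * C_R) * C_K :=
              mul_le_mul hd hKb (abs_nonneg _) (by linarith)
          _ = 2 * C_R * C_K := by ring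
      have := norm_setIntegral_le_of_norm_le_const hμΩ hb
      rw [Real.norm_eq_abs] at this
      calc |∫ y in Ω, (ρ x - ρ y) * K (x - y)| ≤ 2 * C_R * C_K * (volume Ω).toReal := this
        _ = 2 * C_R * C_K * (volume Ω).toReal := by ring
    have h2 : |g x| ≤ 2 * C_R ^ 2 := by
      have hintg3 : IntervalIntegrable (fun θ => |n x θ * (R x θ - ρ x)|) volume (-A) A :=
        (((hncur x).mul ((hRsmooth.continuous.comp
          (continuous_const.prodMk continuous_id)).sub continuous_const)).abs).intervalIntegrable _ _
      have hintg4 : IntervalIntegrable (fun θ => n x θ * (2 * C_R)) volume (-A) A :=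
        ((hncur x).mul continuous_const).intervalIntegrable _ _
      have habs : |g x| ≤ ∫ θ in (-A)..A, |n x θ * (R x θ - ρ x)| := by
        rw [hgdef]
        exact intervalIntegral.abs_integral_le_integral_abs hA'
      have hmono : (∫ θ in (-A)..A, |n x θ * (R x θ - ρ x)|)
          ≤ ∫ θ in (-A)..A, n x θ * (2 * C_R) := by
        refine intervalIntegral.integral_mono_on hA' hintg3 hintg4 fun θ hθ => ?_
        rw [abs_mul, abs_of_pos (hpos x hx θ hθ)]
        refine mul_le_mul_of_nonneg_left ?_ (hpos x hx θ hθ).le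
        have hR := (hRbound x hx θ hθ).1
        have h1' := part1 x hx
        have htri := abs_sub (R x θ) (ρ x)
        have hρa : |ρ x| ≤ C_R := by rw [abs_of_pos h1'.1]; exact h1'.2
        linarith
      have heval : (∫ θ in (-A)..A, n x θ * (2 * C_R)) = ρ x * (2 * C_R) := by
        rw [intervalIntegral.integral_mul_const]
        have : (∫ θ in (-A)..A, n x θ) = ρ x := rfl
        rw [this, mul_comm]
      have h1' := part1 x hx
      have : ρ x * (2 * C_R) ≤ 2 * C_R ^ 2 := by nlinarith
      linarith
    have hk := hkey x hx
    calc |ψ x| = |Λ x - g x| := by rw [hk]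
      _ ≤ |Λ x| + |g x| := abs_sub _ _
      _ ≤ C₂ := by rw [hC₂def]; linarith
  intro x hx
  have hxcl : x ∈ closure Ω := subset_closure hx
  obtain ⟨i, hxi⟩ := mem_iUnion.1 (by rw [hΩ] at hx; exact hx)
  have hddr : deriv (deriv ρ) x = ψ x := by rw [hderivρ]; exact (hφ' x).deriv
  have hψx : |ψ x| ≤ C₂ := hψbd x hxcl
  have hφx : |φ x| ≤ C₂ * (∑ j, (b j - a j)) := by
    have hFTC : (∫ t in (a i)..x, ψ t) = φ x - φ (a i) := by
      refine intervalIntegral.integral_eq_sub_of_hasDerivAt (fun t _ => hφ' t) ?_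
      exact hψc.intervalIntegrable _ _
    have hφa : φ (a i) = 0 := hφEndp _ (Or.inl ⟨i, rfl⟩)
    have hbd : ∀ t ∈ Set.uIoc (a i) x, ‖ψ t‖ ≤ C₂ := by
      intro t ht
      rw [uIoc_of_le hxi.1.le] at ht
      exact hψbd t (hIccCl i ⟨ht.1.le, le_trans ht.2 hxi.2.le⟩)
    have hnorm := intervalIntegral.norm_integral_le_of_norm_le_const hbd
    rw [hFTC, hφa, sub_zero, Real.norm_eq_abs] at hnorm
    have hxa : |x - a i| ≤ ∑ j, (b j - a j) := by
      rw [abs_of_pos (by linarith [hxi.1])]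
      calc x - a i ≤ b i - a i := by linarith [hxi.2]
        _ ≤ ∑ j, (b j - a j) :=
            Finset.single_le_sum (f := fun j => b j - a j)
              (fun j _ => sub_nonneg.2 (hab j).le) (Finset.mem_univ i)
    calc |φ x| ≤ C₂ * |x - a i| := hnorm
      _ ≤ C₂ * (∑ j, (b j - a j)) := mul_le_mul_of_nonneg_left hxa hC₂nn
  constructor
  · rw [hddr]
    refine le_trans hψx ?_
    nlinarith
  · rw [hderivρ]
    refine le_trans hφx ?_
    nlinarith

/-- bounds on the total density `ρ_ε` and on its first two derivatives,
uniformly in `ε`. -/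
theorem rho_bounds
    (m : ℕ) (a b : Fin (m + 1) → ℝ) (Ω : Set ℝ)
    (hab : ∀ i, a i < b i)
    (hord : ∀ i j : Fin (m + 1), i < j → b i < a j)
    (hΩ : Ω = ⋃ i, Ioo (a i) (b i))
    (A : ℝ) (hA : 0 < A)
    (R : ℝ → ℝ → ℝ) (C_R : ℝ)
    (hRsmooth : ContDiff ℝ 1 (Function.uncurry R))
    (hRbound : ∀ x ∈ closure Ω, ∀ θ ∈ Icc (-A) A,
      |R x θ| ≤ C_R ∧ |pdx R x θ| ≤ C_R ∧ |pdt R x θ| ≤ C_R)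
    (K : ℝ → ℝ) (c_K C_K : ℝ)
    (hKsmooth : ContDiff ℝ 1 K)
    (hKeven : ∀ x, K (-x) = K x)
    (hcK : 0 < c_K)
    (hKbound : ∀ x, c_K ≤ K x ∧ K x ≤ C_K ∧ |deriv K x| ≤ C_K)
    :
    (∀ ε : ℝ, 0 < ε → ∀ n : ℝ → ℝ → ℝ, IsPosSolE Ω (range a ∪ range b) A K R ε n →
      ∀ x ∈ closure Ω, 0 < rhoTot A n x ∧ rhoTot A n x ≤ C_R) ∧
    (∃ C : ℝ, 0 < C ∧
      ∀ R' : ℝ → ℝ → ℝ, ContDiff ℝ 1 (Function.uncurry R') →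
        (∀ x ∈ closure Ω, ∀ θ ∈ Icc (-A) A,
          |R' x θ| ≤ C_R ∧ |pdx R' x θ| ≤ C_R ∧ |pdt R' x θ| ≤ C_R) →
      ∀ K' : ℝ → ℝ, ContDiff ℝ 1 K' → (∀ x, K' (-x) = K' x) →
        (∀ x, c_K ≤ K' x ∧ K' x ≤ C_K ∧ |deriv K' x| ≤ C_K) →
      ∀ ε : ℝ, 0 < ε → ∀ n : ℝ → ℝ → ℝ, IsPosSolE Ω (range a ∪ range b) A K' R' ε n →
      ∀ x ∈ Ω, |deriv (deriv (rhoTot A n)) x| ≤ C ∧ |deriv (rhoTot A n) x| ≤ C) := by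
  have hIcc0 : Icc (a 0) (b 0) ⊆ closure Ω := by
    rw [← closure_Ioo (hab 0).ne]
    exact closure_mono (by rw [hΩ]; exact subset_iUnion (fun j => Ioo (a j) (b j)) 0)
  have hCRnn : 0 ≤ C_R :=
    le_trans (abs_nonneg _)
      (hRbound (a 0) (hIcc0 ⟨le_refl _, (hab 0).le⟩) 0 ⟨by linarith, by linarith⟩).1
  have hCKpos : 0 < C_K := lt_of_lt_of_le hcK ((hKbound 0).1.trans (hKbound 0).2.1)
  have hSnn : 0 ≤ ∑ i, (b i - a i) := Finset.sum_nonneg fun j _ => sub_nonneg.2 (hab j).le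
  have hC₂nn : 0 ≤ 2 * C_R * C_K * (volume Ω).toReal + 2 * C_R ^ 2 :=
    add_nonneg (mul_nonneg (mul_nonneg (by linarith) hCKpos.le) ENNReal.toReal_nonneg)
      (by positivity)
  have hprod : 0 ≤ (2 * C_R * C_K * (volume Ω).toReal + 2 * C_R ^ 2) * ((∑ i, (b i - a i)) + 1) :=
    mul_nonneg hC₂nn (by linarith)
  constructor
  · intro ε hε n hsol x hx
    exact (main_est m a b Ω hab hord hΩ A hA R C_R hRsmooth hRbound K c_K C_K hKsmooth hcK hKbound ε n hsol).1 x hx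
  · refine ⟨(2 * C_R * C_K * (volume Ω).toReal + 2 * C_R ^ 2) * ((∑ i, (b i - a i)) + 1) + 1,
      by linarith, ?_⟩
    intro R' hR's hR'b K' hK's hK'e hK'b ε hε n hsol x hx
    obtain ⟨h1, h2⟩ := (main_est m a b Ω hab hord hΩ A hA R' C_R hR's hR'b K' c_K C_K hK's hcK hK'b ε n hsol).2 x hx
    exact ⟨h1.trans (by linarith), h2.trans (by linarith)⟩
end
end

section
/- (Hopf Lemma.) Assume (H1) and (H3). Let c : closure(Ω) → ℝ be a nonnegative, bounded, smooth function and let u be a C² function on closure(Ω) satisfying −u″ + Lu + c·u ≥ 0 on Ω. Suppose there exists a boundary point x₀ ∈ ∂Ω such that min_{closure(Ω)} u = u(x₀) < 0. Then either u is constant on closure(Ω), or the outward normal derivative of u at x₀ is strictly negative (i.e. u′(x₀) < 0 if x₀ is a right endpoint of a component interval of Ω, and u′(x₀) > 0 if x₀ is a left endpoint). -/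
open MeasureTheory Set Real Filter Topology

noncomputable section

/-- Hopf Lemma: if `-u'' + Lu + c u ≥ 0` on `Ω`, `c ≥ 0`, and `u`
attains a negative minimum over `closure Ω` at a boundary point `x₀`, then either
`u` is constant or the outward normal derivative of `u` at `x₀` is negative. -/
theorem hopf_lemma
    (m : ℕ) (a b : Fin (m + 1) → ℝ) (Ω : Set ℝ)
    (hab : ∀ i, a i < b i)
    (hord : ∀ i j : Fin (m + 1), i < j → b i < a j)
    (hΩ : Ω = ⋃ i, Ioo (a i) (b i))
    (K : ℝ → ℝ) (c_K C_K : ℝ)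
    (hKsmooth : ContDiff ℝ 1 K)
    (hKeven : ∀ x, K (-x) = K x)
    (hcK : 0 < c_K)
    (hKbound : ∀ x, c_K ≤ K x ∧ K x ≤ C_K ∧ |deriv K x| ≤ C_K)
    (c : ℝ → ℝ) (hcsmooth : ContDiff ℝ (⊤ : ℕ∞) c)
    (hcnonneg : ∀ x ∈ closure Ω, 0 ≤ c x)
    (hcbdd : ∃ M, ∀ x ∈ closure Ω, |c x| ≤ M)
    (u : ℝ → ℝ) (hu : ContDiff ℝ 2 u)
    (hineq : ∀ x ∈ Ω,
      0 ≤ -deriv (deriv u) x + (∫ y in Ω, (u x - u y) * K (x - y)) + c x * u x)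
    (x₀ : ℝ) (hx₀ : x₀ ∈ range a ∪ range b)
    (hmin : ∀ x ∈ closure Ω, u x₀ ≤ u x)
    (hneg : u x₀ < 0) :
    (∀ x ∈ closure Ω, ∀ y ∈ closure Ω, u x = u y) ∨
    (((∃ i, x₀ = b i) → deriv u x₀ < 0) ∧ ((∃ i, x₀ = a i) → 0 < deriv u x₀)) := by
  -- Basic regularity facts
  have huc : Continuous u := hu.continuous
  have hud : Differentiable ℝ u := hu.differentiable (by norm_num)
  have hu1 : ContDiff ℝ 1 (deriv u) :=
    (contDiff_succ_iff_deriv.mp (by rw [one_add_one_eq_two]; exact hu)).2.2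
  have hu1c : Continuous (deriv u) := hu1.continuous
  have hu2 : Continuous (deriv (deriv u)) := hu1.continuous_deriv le_rfl
  have hKcont : Continuous K := hKsmooth.continuous
  have hKpos : ∀ x, 0 < K x := fun x => lt_of_lt_of_le hcK (hKbound x).1
  have hCK : 0 < C_K := lt_of_lt_of_le (hKpos 0) (hKbound 0).2.1
  have hcc : Continuous c := hcsmooth.continuous
  -- Ω is open and bounded
  have hΩopen : IsOpen Ω := by rw [hΩ]; exact isOpen_iUnion fun i => isOpen_Ioo
  have hΩm : MeasurableSet Ω := hΩopen.measurableSet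
  set A : ℝ := a 0 with hA
  set B : ℝ := b (Fin.last m) with hB
  have hsub : Ω ⊆ Icc A B := by
    rw [hΩ]
    refine iUnion_subset fun i => ?_
    intro x hx
    have h1 : A ≤ a i := by
      rcases eq_or_ne i 0 with h | h
      · rw [h]
      · have h0 : (0 : Fin (m + 1)) < i := Fin.pos_of_ne_zero h
        have := hord 0 i h0; have := hab 0; exact le_of_lt (by linarith)
    have h2 : b i ≤ B := by
      rcases eq_or_ne i (Fin.last m) with h | h
      · rw [h]
      · have h0 : i < Fin.last m := lt_of_le_of_ne (Fin.le_last i) h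
        have := hord i (Fin.last m) h0; have := hab (Fin.last m); exact le_of_lt (by linarith)
    exact ⟨le_of_lt (lt_of_le_of_lt h1 hx.1), le_of_lt (lt_of_lt_of_le hx.2 h2)⟩
  have hIccsub : ∀ i : Fin (m + 1), Icc (a i) (b i) ⊆ closure Ω := by
    intro i
    have h1 : Ioo (a i) (b i) ⊆ Ω := by
      rw [hΩ]; exact subset_iUnion (fun i => Ioo (a i) (b i)) i
    have := closure_mono h1
    rwa [closure_Ioo (ne_of_lt (hab i))] at this
  have hx₀cl : x₀ ∈ closure Ω := by
    rcases hx₀ with ⟨i, hi⟩ | ⟨i, hi⟩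
    · exact hIccsub i (by rw [← hi]; exact ⟨le_rfl, le_of_lt (hab i)⟩)
    · exact hIccsub i (by rw [← hi]; exact ⟨le_of_lt (hab i), le_rfl⟩)
  have hminΩ : ∀ x ∈ Ω, u x₀ ≤ u x := fun x hx => hmin x (subset_closure hx)
  -- one-sided sign of the derivative at endpoints
  have slope_le : ∀ i : Fin (m + 1), x₀ = b i → deriv u x₀ ≤ 0 := by
    intro i hi
    have htend := hasDerivAt_iff_tendsto_slope.mp (hud x₀).hasDerivAt
    have hax : a i < x₀ := by rw [hi]; exact hab i
    have hne : (𝓝[Ioo (a i) x₀] x₀).NeBot := by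
      apply mem_closure_iff_nhdsWithin_neBot.mp
      rw [closure_Ioo (ne_of_lt hax)]
      exact ⟨le_of_lt hax, le_rfl⟩
    have htend2 : Tendsto (slope u x₀) (𝓝[Ioo (a i) x₀] x₀) (𝓝 (deriv u x₀)) :=
      htend.mono_left (nhdsWithin_mono _ (fun y hy => ne_of_lt hy.2))
    refine le_of_tendsto htend2 (eventually_mem_nhdsWithin.mono fun y hy => ?_)
    have hyΩ : y ∈ Ω := by
      rw [hΩ]; exact mem_iUnion.mpr ⟨i, hy.1, by rw [← hi]; exact hy.2⟩
    have h1 : 0 ≤ u y - u x₀ := sub_nonneg.mpr (hminΩ y hyΩ)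
    have h2 : y - x₀ < 0 := sub_neg.mpr hy.2
    rw [slope_def_field]
    exact div_nonpos_iff.mpr (Or.inl ⟨h1, h2.le⟩)
  have slope_ge : ∀ i : Fin (m + 1), x₀ = a i → 0 ≤ deriv u x₀ := by
    intro i hi
    have htend := hasDerivAt_iff_tendsto_slope.mp (hud x₀).hasDerivAt
    have hax : x₀ < b i := by rw [hi]; exact hab i
    have hne : (𝓝[Ioo x₀ (b i)] x₀).NeBot := by
      apply mem_closure_iff_nhdsWithin_neBot.mp
      rw [closure_Ioo (ne_of_lt hax)]
      exact ⟨le_rfl, le_of_lt hax⟩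
    have htend2 : Tendsto (slope u x₀) (𝓝[Ioo x₀ (b i)] x₀) (𝓝 (deriv u x₀)) :=
      htend.mono_left (nhdsWithin_mono _ (fun y hy => ne_of_gt hy.1))
    refine ge_of_tendsto htend2 (eventually_mem_nhdsWithin.mono fun y hy => ?_)
    have hyΩ : y ∈ Ω := by
      rw [hΩ]; exact mem_iUnion.mpr ⟨i, by rw [← hi]; exact hy.1, hy.2⟩
    have h1 : 0 ≤ u y - u x₀ := sub_nonneg.mpr (hminΩ y hyΩ)
    have h2 : 0 < y - x₀ := sub_pos.mpr hy.1
    rw [slope_def_field]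
    exact div_nonneg h1 h2.le
  by_cases hd : deriv u x₀ = 0
  · -- derivative vanishes: we show u must be constant
    by_cases hconst : ∀ x ∈ closure Ω, ∀ y ∈ closure Ω, u x = u y
    · exact Or.inl hconst
    exfalso
    push_neg at hconst
    obtain ⟨p, hp, q, hq, hpq⟩ := hconst
    -- a point where u > u x₀
    have hy₁ : ∃ y₁ ∈ closure Ω, u x₀ < u y₁ := by
      rcases lt_or_eq_of_le (hmin p hp) with h | h
      · exact ⟨p, hp, h⟩
      · rcases lt_or_eq_of_le (hmin q hq) with h' | h'
        · exact ⟨q, hq, h'⟩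
        · exact absurd (h.symm.trans h') hpq
    obtain ⟨y₁, hy₁cl, hy₁gt⟩ := hy₁
    set η : ℝ := (u y₁ - u x₀) / 2 with hη
    have hηpos : 0 < η := by rw [hη]; linarith
    -- a small ball inside Ω on which u > u x₀ + η
    have hev : ∀ᶠ y in 𝓝 y₁, u x₀ + η < u y :=
      Tendsto.eventually_const_lt (by rw [hη]; linarith) huc.continuousAt
    obtain ⟨ρ, hρpos, hρ⟩ := Metric.eventually_nhds_iff.mp hev
    obtain ⟨z, hzΩ, hzd⟩ := Metric.mem_closure_iff.mp hy₁cl (ρ / 2) (by linarith)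
    obtain ⟨ε', hε'pos, hε'⟩ := Metric.isOpen_iff.mp hΩopen z hzΩ
    set r : ℝ := min ε' (ρ / 2) with hr
    have hrpos : 0 < r := lt_min hε'pos (by linarith)
    set J : Set ℝ := Metric.ball z r with hJ
    have hJΩ : J ⊆ Ω := fun y hy => hε' (Metric.ball_subset_ball (min_le_left _ _) hy)
    have hJu : ∀ y ∈ J, u x₀ + η < u y := by
      intro y hy
      apply hρ
      have h1 : dist y z < ρ / 2 := lt_of_lt_of_le (Metric.mem_ball.mp hy) (min_le_right _ _)
      have h2 : dist z y₁ < ρ / 2 := by rw [dist_comm]; exact hzd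
      calc dist y y₁ ≤ dist y z + dist z y₁ := dist_triangle _ _ _
        _ < ρ := by linarith
    -- the nonlocal term at x₀ is strictly negative
    set f : ℝ → ℝ := fun y => (u x₀ - u y) * K (x₀ - y) with hf
    have hfc : Continuous f :=
      (continuous_const.sub huc).mul (hKcont.comp (continuous_const.sub continuous_id))
    have hfint : IntegrableOn f Ω := (hfc.integrableOn_Icc (a := A) (b := B)).mono_set hsub
    have hfnonpos : ∀ y ∈ Ω, f y ≤ 0 := fun y hy =>
      mul_nonpos_of_nonpos_of_nonneg (sub_nonpos.mpr (hminΩ y hy)) (hKpos _).le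
    have step1 : ∫ y in Ω, f y ≤ ∫ y in J, f y := by
      have h := setIntegral_mono_set (f := fun y => -f y) (s := J) (t := Ω) hfint.neg
        ((ae_restrict_iff' hΩm).mpr (ae_of_all _ fun y hy => neg_nonneg.mpr (hfnonpos y hy)))
        (HasSubset.Subset.eventuallyLE hJΩ)
      simp only [integral_neg] at h
      linarith
    have step2 : ∫ y in J, f y ≤ ∫ y in J, (-(η * c_K)) := by
      apply setIntegral_mono_on (hfint.mono_set hJΩ)
        (integrableOn_const measure_ball_lt_top.ne) measurableSet_ball
      intro y hy
      have h1 : u x₀ - u y ≤ -η := by have := hJu y hy; linarith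
      have h2 : c_K ≤ K (x₀ - y) := (hKbound _).1
      calc (u x₀ - u y) * K (x₀ - y) ≤ (-η) * K (x₀ - y) :=
            mul_le_mul_of_nonneg_right h1 (hKpos _).le
        _ ≤ -(η * c_K) := by nlinarith [hKpos (x₀ - y)]
    have step3 : ∫ y in J, (-(η * c_K)) = (volume J).toReal * (-(η * c_K)) := by
      rw [setIntegral_const]; simp [smul_eq_mul, measureReal_def]
    have hvolJ : 0 < (volume J).toReal := by
      rw [hJ, Real.volume_ball, ENNReal.toReal_ofReal (by linarith)]
      linarith
    have hLneg : ∫ y in Ω, f y < 0 := by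
      have hlt : (volume J).toReal * (-(η * c_K)) < 0 :=
        mul_neg_of_pos_of_neg hvolJ (by nlinarith)
      calc ∫ y in Ω, f y ≤ ∫ y in J, f y := step1
        _ ≤ ∫ y in J, (-(η * c_K)) := step2
        _ = (volume J).toReal * (-(η * c_K)) := step3
        _ < 0 := hlt
    -- the differential inequality extends to x₀ by continuity
    set F : ℝ → ℝ :=
      fun x => -deriv (deriv u) x + (∫ y in Ω, (u x - u y) * K (x - y)) + c x * u x with hF
    have hGcont : Continuous fun x => ∫ y in Ω, (u x - u y) * K (x - y) := by
      rw [continuous_iff_continuousAt]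
      intro x
      have hbev : ∀ᶠ x' in 𝓝 x, |u x'| < |u x| + 1 :=
        Tendsto.eventually_lt_const (by linarith) huc.abs.continuousAt
      apply continuousAt_of_dominated (bound := fun y => (|u x| + 1 + |u y|) * C_K)
      · exact Eventually.of_forall fun x' =>
          ((continuous_const.sub huc).mul
            (hKcont.comp (continuous_const.sub continuous_id))).aestronglyMeasurable
      · refine hbev.mono fun x' hx' => ?_
        refine (ae_restrict_iff' hΩm).mpr (ae_of_all _ fun y _ => ?_)
        have h1 : |u x' - u y| ≤ |u x'| + |u y| := abs_sub _ _
        have h2 : |K (x' - y)| ≤ C_K := by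
          rw [abs_of_pos (hKpos _)]; exact (hKbound _).2.1
        rw [Real.norm_eq_abs, abs_mul]
        calc |u x' - u y| * |K (x' - y)| ≤ (|u x'| + |u y|) * C_K := by
              apply mul_le_mul h1 h2 (abs_nonneg _); positivity
          _ ≤ (|u x| + 1 + |u y|) * C_K := by nlinarith [abs_nonneg (u y)]
      · exact (((continuous_const.add huc.abs).mul
          continuous_const).integrableOn_Icc (a := A) (b := B)).mono_set hsub
      · exact ae_of_all _ fun y =>
          ((huc.sub continuous_const).mul
            (hKcont.comp (continuous_sub_right y))).continuousAt
    have hFcont : Continuous F := (hu2.neg.add hGcont).add (hcc.mul huc)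
    have hFx₀ : 0 ≤ F x₀ := by
      haveI hnb : (𝓝[Ω] x₀).NeBot := mem_closure_iff_nhdsWithin_neBot.mp hx₀cl
      exact ge_of_tendsto (hFcont.continuousAt.mono_left nhdsWithin_le_nhds)
        (eventually_mem_nhdsWithin.mono fun y hy => hineq y hy)
    have hcu : c x₀ * u x₀ ≤ 0 :=
      mul_nonpos_of_nonneg_of_nonpos (hcnonneg x₀ hx₀cl) hneg.le
    have hD : deriv (deriv u) x₀ < 0 := by
      have hFval : F x₀ = -deriv (deriv u) x₀ + (∫ y in Ω, f y) + c x₀ * u x₀ := rfl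
      rw [hFval] at hFx₀
      linarith
    -- a neighbourhood where u'' < 0
    have hevD : ∀ᶠ t in 𝓝 x₀, deriv (deriv u) t < 0 :=
      Tendsto.eventually_lt_const hD hu2.continuousAt
    obtain ⟨r2, hr2pos, hr2⟩ := Metric.eventually_nhds_iff.mp hevD
    -- final contradiction using the one-sided minimum
    rcases hx₀ with ⟨i, hi⟩ | ⟨i, hi⟩
    · -- x₀ = a i : u is strictly decreasing just to the right of x₀
      set s : ℝ := min (r2 / 2) ((b i - a i) / 2) with hs
      have hbi := hab i
      have hspos : 0 < s := lt_min (by linarith) (by linarith)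
      have hanti : StrictAntiOn (deriv u) (Icc x₀ (x₀ + s)) := by
        apply strictAntiOn_of_deriv_neg (convex_Icc _ _) hu1c.continuousOn
        intro t ht
        rw [interior_Icc] at ht
        apply hr2
        rw [Real.dist_eq, abs_of_pos (by linarith [ht.1])]
        have : s ≤ r2 / 2 := min_le_left _ _
        linarith [ht.2]
      have hderneg : ∀ t ∈ Ioo x₀ (x₀ + s), deriv u t < 0 := by
        intro t ht
        have := hanti (left_mem_Icc.mpr (by linarith)) ⟨ht.1.le, ht.2.le⟩ ht.1
        rw [hd] at this
        exact this
      have hmono : StrictAntiOn u (Icc x₀ (x₀ + s)) := by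
        apply strictAntiOn_of_deriv_neg (convex_Icc _ _) huc.continuousOn
        intro t ht
        rw [interior_Icc] at ht
        exact hderneg t ht
      have hlt : u (x₀ + s) < u x₀ :=
        hmono (left_mem_Icc.mpr (by linarith)) (right_mem_Icc.mpr (by linarith))
          (by linarith)
      have hmem : x₀ + s ∈ Ω := by
        rw [hΩ]
        refine mem_iUnion.mpr ⟨i, ?_, ?_⟩
        · rw [← hi]; linarith
        · have : s ≤ (b i - a i) / 2 := min_le_right _ _
          rw [← hi] at *; linarith
      linarith [hminΩ _ hmem]
    · -- x₀ = b i : u is strictly increasing just to the left of x₀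
      set s : ℝ := min (r2 / 2) ((b i - a i) / 2) with hs
      have hbi := hab i
      have hspos : 0 < s := lt_min (by linarith) (by linarith)
      have hanti : StrictAntiOn (deriv u) (Icc (x₀ - s) x₀) := by
        apply strictAntiOn_of_deriv_neg (convex_Icc _ _) hu1c.continuousOn
        intro t ht
        rw [interior_Icc] at ht
        apply hr2
        rw [Real.dist_eq, abs_of_neg (by linarith [ht.2])]
        have : s ≤ r2 / 2 := min_le_left _ _
        linarith [ht.1]
      have hderpos : ∀ t ∈ Ioo (x₀ - s) x₀, 0 < deriv u t := by
        intro t ht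
        have := hanti ⟨ht.1.le, ht.2.le⟩ (right_mem_Icc.mpr (by linarith)) ht.2
        rw [hd] at this
        exact this
      have hmono : StrictMonoOn u (Icc (x₀ - s) x₀) := by
        apply strictMonoOn_of_deriv_pos (convex_Icc _ _) huc.continuousOn
        intro t ht
        rw [interior_Icc] at ht
        exact hderpos t ht
      have hlt : u (x₀ - s) < u x₀ :=
        hmono (left_mem_Icc.mpr (by linarith)) (right_mem_Icc.mpr (by linarith))
          (by linarith)
      have hmem : x₀ - s ∈ Ω := by
        rw [hΩ]
        refine mem_iUnion.mpr ⟨i, ?_, ?_⟩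
        · have : s ≤ (b i - a i) / 2 := min_le_right _ _
          rw [← hi] at *; linarith
        · rw [← hi]; linarith
      linarith [hminΩ _ hmem]
  · -- derivative does not vanish: strict Hopf sign
    right
    constructor
    · rintro ⟨i, hi⟩
      exact lt_of_le_of_ne (slope_le i hi) hd
    · rintro ⟨i, hi⟩
      exact lt_of_le_of_ne (slope_ge i hi) (Ne.symm hd)
end
end

section
/- Assume (H1)–(H3), and let ρ be a bounded smooth function on closure(Ω). Suppose θ ↦ λ(θ) ∈ ℝ and (x, θ) ↦ ψ^θ(x) are such that for each θ ∈ (−A, A), (λ(θ), ψ^θ) is an eigenpair of the spatial eigenproblem with data (θ, ρ) and ∫_Ω ψ^θ(x)² dx = 1; suppose moreover that λ and ψ^θ are continuously differentiable in θ, that ∂_θ ψ^θ is C² in x on closure(Ω), and that ∂_x ∂_θ ψ^θ vanishes at every endpoint of the intervals composing Ω. Then ∂_θ λ(θ) = − ∫_Ω ∂_θ R(x, θ) ψ^θ(x)² dx for every θ ∈ (−A, A). -/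
open MeasureTheory Set Real Filter Topology

noncomputable section

/-- An eigenpair of the spatial eigenproblem with data `(θ, ρ)`. -/
def IsSpatialEigen (Ω Endp : Set ℝ) (K : ℝ → ℝ) (R : ℝ → ℝ → ℝ)
    (θ : ℝ) (ρ : ℝ → ℝ) (lam : ℝ) (ψ : ℝ → ℝ) : Prop :=
  ContDiff ℝ 2 ψ ∧ (∀ x ∈ closure Ω, 0 < ψ x) ∧
  (∀ x ∈ Ω,
    -deriv (deriv ψ) x + (∫ y in Ω, (ψ x - ψ y) * K (x - y)) - (R x θ - ρ x) * ψ x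
      = lam * ψ x) ∧
  (∀ x ∈ Endp, deriv ψ x = 0)

lemma cont_derivs {u : ℝ → ℝ} (hu : ContDiff ℝ 2 u) :
    Continuous (deriv u) ∧ Continuous (deriv (deriv u)) := by
  have h1 : ContDiff ℝ ((1:WithTop ℕ∞)+1) u := by norm_num at hu ⊢; exact hu
  have h2 := (contDiff_succ_iff_deriv.mp h1).2.2
  have h3 : ContDiff ℝ ((0:WithTop ℕ∞)+1) (deriv u) := by norm_num at h2 ⊢; exact h2
  have h4 := (contDiff_succ_iff_deriv.mp h3).2.2
  exact ⟨h2.continuous, h4.continuous⟩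

lemma integrableOn_of_cont {Ω : Set ℝ} (h : Bornology.IsBounded Ω) {f : ℝ → ℝ}
    (hf : Continuous f) : IntegrableOn f Ω := by
  exact (hf.continuousOn.integrableOn_compact h.isCompact_closure).mono_set subset_closure

lemma integrableOn_prod_of_cont {Ω : Set ℝ} (h : Bornology.IsBounded Ω) {f : ℝ × ℝ → ℝ}
    (hf : Continuous f) :
    Integrable f ((volume.restrict Ω).prod (volume.restrict Ω)) := by
  rw [Measure.prod_restrict]
  have h2 : IsCompact (closure Ω ×ˢ closure Ω) :=
    h.isCompact_closure.prod h.isCompact_closure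
  have : IntegrableOn f (closure Ω ×ˢ closure Ω) (volume.prod volume) := by
    rw [← Measure.volume_eq_prod]
    exact hf.continuousOn.integrableOn_compact h2
  exact this.mono_set (prod_mono subset_closure subset_closure)

/-- Integration by parts: `∫_Ω (v'' u - u'' v) = 0` with Neumann boundary conditions. -/
lemma ibp_zero (m : ℕ) (a b : Fin (m + 1) → ℝ) (Ω : Set ℝ)
    (hab : ∀ i, a i < b i)
    (hord : ∀ i j : Fin (m + 1), i < j → b i < a j)
    (hΩ : Ω = ⋃ i, Ioo (a i) (b i))
    (u v : ℝ → ℝ) (hu : ContDiff ℝ 2 u) (hv : ContDiff ℝ 2 v)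
    (hNu : ∀ i, deriv u (a i) = 0 ∧ deriv u (b i) = 0)
    (hNv : ∀ i, deriv v (a i) = 0 ∧ deriv v (b i) = 0) :
    ∫ x in Ω, (deriv (deriv v) x * u x - deriv (deriv u) x * v x) = 0 := by
  have hΩbdd : Bornology.IsBounded Ω := by
    rw [hΩ]; exact Bornology.isBounded_iUnion.mpr (fun i => Metric.isBounded_Ioo _ _)
  obtain ⟨hu', hu''⟩ := cont_derivs hu
  obtain ⟨hv', hv''⟩ := cont_derivs hv
  set f : ℝ → ℝ := fun x => deriv (deriv v) x * u x - deriv (deriv u) x * v x with hf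
  have hfc : Continuous f := (hv''.mul hu.continuous).sub (hu''.mul hv.continuous)
  have hdisj : Pairwise (Function.onFun Disjoint fun i => Ioo (a i) (b i)) := by
    intro i j hij
    rcases lt_or_gt_of_ne hij with h | h
    · exact Set.disjoint_left.mpr (fun x hx1 hx2 => absurd (hord i j h) (by push_neg; linarith [hx1.2, hx2.1]))
    · exact Set.disjoint_left.mpr (fun x hx1 hx2 => absurd (hord j i h) (by push_neg; linarith [hx1.1, hx2.2]))
  have hsplit : ∫ x in Ω, f x = ∑ i : Fin (m+1), ∫ x in Ioo (a i) (b i), f x := by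
    rw [hΩ, integral_iUnion (fun i => measurableSet_Ioo) hdisj
      (by rw [← hΩ]; exact integrableOn_of_cont hΩbdd hfc), tsum_fintype]
  rw [hsplit]
  apply Finset.sum_eq_zero
  intro i _
  have hW : ∀ x : ℝ, HasDerivAt (fun y => deriv v y * u y - deriv u y * v y) (f x) x := by
    intro x
    have h1 : HasDerivAt u (deriv u x) x :=
      ((hu.differentiable (by norm_num)) x).hasDerivAt
    have h2 : HasDerivAt v (deriv v x) x :=
      ((hv.differentiable (by norm_num)) x).hasDerivAt
    have h3 : HasDerivAt (deriv u) (deriv (deriv u) x) x := by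
      have : ContDiff ℝ ((0:WithTop ℕ∞)+1) (deriv u) := by
        have h1' : ContDiff ℝ ((1:WithTop ℕ∞)+1) u := by norm_num at hu ⊢; exact hu
        have := (contDiff_succ_iff_deriv.mp h1').2.2
        norm_num at this ⊢; exact this
      exact (((contDiff_succ_iff_deriv.mp this).1) x).hasDerivAt
    have h4 : HasDerivAt (deriv v) (deriv (deriv v) x) x := by
      have : ContDiff ℝ ((0:WithTop ℕ∞)+1) (deriv v) := by
        have h1' : ContDiff ℝ ((1:WithTop ℕ∞)+1) v := by norm_num at hv ⊢; exact hv
        have := (contDiff_succ_iff_deriv.mp h1').2.2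
        norm_num at this ⊢; exact this
      exact (((contDiff_succ_iff_deriv.mp this).1) x).hasDerivAt
    have : HasDerivAt (fun y => deriv v y * u y - deriv u y * v y) (deriv (deriv v) x * u x + deriv v x * deriv u x - (deriv (deriv u) x * v x + deriv u x * deriv v x)) x := ((h4.mul h1).sub (h3.mul h2))
    convert this using 1
    simp only [hf]; ring
  have : ∫ x in Ioo (a i) (b i), f x = ∫ x in (a i)..(b i), f x := by
    rw [intervalIntegral.integral_of_le (hab i).le, integral_Ioc_eq_integral_Ioo]
  rw [this, intervalIntegral.integral_eq_sub_of_hasDerivAt (fun x _ => hW x)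
    (hfc.intervalIntegrable _ _)]
  rw [(hNu i).1, (hNu i).2, (hNv i).1, (hNv i).2]
  ring

/-- Symmetry of the nonlocal term: `∫_Ω ((Lu) v - (Lv) u) = 0`. -/
lemma nonlocal_sym_zero (Ω : Set ℝ) (hΩbdd : Bornology.IsBounded Ω)
    (K : ℝ → ℝ) (hK : Continuous K) (hKeven : ∀ x, K (-x) = K x)
    (u v : ℝ → ℝ) (huc : Continuous u) (hvc : Continuous v) :
    ∫ x in Ω, ((∫ y in Ω, (u x - u y) * K (x - y)) * v x
      - (∫ y in Ω, (v x - v y) * K (x - y)) * u x) = 0 := by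
  set μ := volume.restrict Ω with hμ
  have hswap : ∀ x y : ℝ, K (y - x) = K (x - y) := by
    intro x y; rw [← hKeven (x - y)]; ring_nf
  set H : ℝ → ℝ → ℝ := fun x y => (v y * u x - u y * v x) * K (x - y) with hH
  have hHcont : Continuous (Function.uncurry H) := by
    apply Continuous.mul
    · exact ((hvc.comp continuous_snd).mul (huc.comp continuous_fst)).sub
        ((huc.comp continuous_snd).mul (hvc.comp continuous_fst))
    · exact hK.comp ((continuous_fst).sub continuous_snd)
  have hHint : Integrable (Function.uncurry H) (μ.prod μ) :=
    integrableOn_prod_of_cont hΩbdd hHcont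
  have hyint : ∀ (w : ℝ → ℝ), Continuous w → ∀ x : ℝ,
      Integrable (fun y => (w x - w y) * K (x - y)) μ := by
    intro w hw x
    apply integrableOn_of_cont hΩbdd
    exact ((continuous_const.sub hw).mul (hK.comp (continuous_const.sub continuous_id)))
  have hHyint : ∀ x : ℝ, Integrable (fun y => H x y) μ := by
    intro x
    apply integrableOn_of_cont hΩbdd
    exact ((hvc.mul continuous_const).sub (huc.mul continuous_const)).mul
      (hK.comp (continuous_const.sub continuous_id))
  have step1 : ∀ x : ℝ, (∫ y in Ω, (u x - u y) * K (x - y)) * v x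
      - (∫ y in Ω, (v x - v y) * K (x - y)) * u x = ∫ y, H x y ∂μ := by
    intro x
    rw [← integral_mul_const, ← integral_mul_const, ← integral_sub
      (((hyint u huc x).mul_const _)) (((hyint v hvc x).mul_const _))]
    apply integral_congr_ae
    filter_upwards with y
    simp only [hH]; ring
  have step2 : ∫ x in Ω, ((∫ y in Ω, (u x - u y) * K (x - y)) * v x
      - (∫ y in Ω, (v x - v y) * K (x - y)) * u x) = ∫ x, (∫ y, H x y ∂μ) ∂μ := by
    exact integral_congr_ae (Filter.Eventually.of_forall step1)
  rw [step2]
  have hanti : ∀ x y : ℝ, H y x = -H x y := by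
    intro x y; simp only [hH]; rw [hswap]; ring
  have hswapJ : ∫ x, (∫ y, H x y ∂μ) ∂μ = ∫ x, (∫ y, H y x ∂μ) ∂μ :=
    integral_integral_swap hHint
  have : ∫ x, (∫ y, H x y ∂μ) ∂μ = - ∫ x, (∫ y, H x y ∂μ) ∂μ := by
    nth_rewrite 1 [hswapJ]
    rw [← integral_neg]
    apply integral_congr_ae
    filter_upwards with x
    rw [← integral_neg]
    apply integral_congr_ae
    filter_upwards with y
    exact hanti x y
  linarith [this]

/-- Key identity: for two eigenpairs, `(l1 - l2) ∫ u v = ∫ (r2 - r1) u v`. -/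
lemma key_identity (m : ℕ) (a b : Fin (m + 1) → ℝ) (Ω : Set ℝ)
    (hab : ∀ i, a i < b i)
    (hord : ∀ i j : Fin (m + 1), i < j → b i < a j)
    (hΩ : Ω = ⋃ i, Ioo (a i) (b i))
    (K : ℝ → ℝ) (hK : Continuous K) (hKeven : ∀ x, K (-x) = K x)
    (u v r1 r2 : ℝ → ℝ) (hu : ContDiff ℝ 2 u) (hv : ContDiff ℝ 2 v)
    (hr1 : Continuous r1) (hr2 : Continuous r2) (l1 l2 : ℝ)
    (hequ : ∀ x ∈ Ω, -deriv (deriv u) x + (∫ y in Ω, (u x - u y) * K (x - y)) - r1 x * u x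
      = l1 * u x)
    (heqv : ∀ x ∈ Ω, -deriv (deriv v) x + (∫ y in Ω, (v x - v y) * K (x - y)) - r2 x * v x
      = l2 * v x)
    (hNu : ∀ i, deriv u (a i) = 0 ∧ deriv u (b i) = 0)
    (hNv : ∀ i, deriv v (a i) = 0 ∧ deriv v (b i) = 0) :
    (l1 - l2) * ∫ x in Ω, u x * v x = ∫ x in Ω, (r2 x - r1 x) * (u x * v x) := by
  have hΩmeas : MeasurableSet Ω := by
    rw [hΩ]; exact MeasurableSet.iUnion (fun i => measurableSet_Ioo)
  have hΩbdd : Bornology.IsBounded Ω := by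
    rw [hΩ]; exact Bornology.isBounded_iUnion.mpr (fun i => Metric.isBounded_Ioo _ _)
  obtain ⟨hu', hu''⟩ := cont_derivs hu
  obtain ⟨hv', hv''⟩ := cont_derivs hv
  have huc : Continuous u := hu.continuous
  have hvc : Continuous v := hv.continuous
  have hnl_int : ∀ (w1 w2 : ℝ → ℝ), Continuous w1 → Continuous w2 →
      IntegrableOn (fun x => (∫ y in Ω, (w1 x - w1 y) * K (x - y)) * w2 x) Ω := by
    intro w1 w2 hw1 hw2
    have hfc : Continuous (Function.uncurry (fun x y => (w1 x - w1 y) * K (x - y) * w2 x)) := by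
      exact (((hw1.comp continuous_fst).sub (hw1.comp continuous_snd)).mul
        (hK.comp (continuous_fst.sub continuous_snd))).mul (hw2.comp continuous_fst)
    have hint := integrableOn_prod_of_cont hΩbdd hfc
    have h2 := hint.integral_prod_left
    simp only [Function.uncurry_apply_pair] at h2
    have heq : (fun x => ∫ y, (w1 x - w1 y) * K (x - y) * w2 x ∂(volume.restrict Ω))
        = fun x => (∫ y in Ω, (w1 x - w1 y) * K (x - y)) * w2 x := by
      funext x; rw [← integral_mul_const]
    rwa [heq] at h2
  have hgUv_int : IntegrableOn (fun x => (∫ y in Ω, (u x - u y) * K (x - y)) * v x) Ω :=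
    hnl_int u v huc hvc
  have hgVu_int : IntegrableOn (fun x => (∫ y in Ω, (v x - v y) * K (x - y)) * u x) Ω :=
    hnl_int v u hvc huc
  have hsym : ∫ x in Ω, ((∫ y in Ω, (u x - u y) * K (x - y)) * v x
      - (∫ y in Ω, (v x - v y) * K (x - y)) * u x) = 0 :=
    nonlocal_sym_zero Ω hΩbdd K hK hKeven u v huc hvc
  have hibp : ∫ x in Ω, (deriv (deriv v) x * u x - deriv (deriv u) x * v x) = 0 :=
    ibp_zero m a b Ω hab hord hΩ u v hu hv hNu hNv
  have hpt : ∀ x ∈ Ω, (l1 - l2) * (u x * v x)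
      = (deriv (deriv v) x * u x - deriv (deriv u) x * v x)
        + ((∫ y in Ω, (u x - u y) * K (x - y)) * v x
            - (∫ y in Ω, (v x - v y) * K (x - y)) * u x)
        + (r2 x - r1 x) * (u x * v x) := by
    intro x hx
    have e1 := hequ x hx
    have e2 := heqv x hx
    linear_combination u x * e2 - v x * e1
  have hint1 : IntegrableOn (fun x => deriv (deriv v) x * u x - deriv (deriv u) x * v x) Ω :=
    integrableOn_of_cont hΩbdd ((hv''.mul huc).sub (hu''.mul hvc))
  have hint2 : IntegrableOn (fun x => (∫ y in Ω, (u x - u y) * K (x - y)) * v x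
      - (∫ y in Ω, (v x - v y) * K (x - y)) * u x) Ω := hgUv_int.sub hgVu_int
  have hint12 : IntegrableOn (fun x => (deriv (deriv v) x * u x - deriv (deriv u) x * v x)
      + ((∫ y in Ω, (u x - u y) * K (x - y)) * v x
          - (∫ y in Ω, (v x - v y) * K (x - y)) * u x)) Ω := hint1.add hint2
  have hint3 : IntegrableOn (fun x => (r2 x - r1 x) * (u x * v x)) Ω :=
    integrableOn_of_cont hΩbdd ((hr2.sub hr1).mul (huc.mul hvc))
  calc (l1 - l2) * ∫ x in Ω, u x * v x
      = ∫ x in Ω, (l1 - l2) * (u x * v x) := (integral_const_mul _ _).symm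
    _ = ∫ x in Ω, ((deriv (deriv v) x * u x - deriv (deriv u) x * v x)
        + ((∫ y in Ω, (u x - u y) * K (x - y)) * v x
            - (∫ y in Ω, (v x - v y) * K (x - y)) * u x)
        + (r2 x - r1 x) * (u x * v x)) :=
        setIntegral_congr_fun hΩmeas (fun x hx => hpt x hx)
    _ = (∫ x in Ω, ((deriv (deriv v) x * u x - deriv (deriv u) x * v x)
        + ((∫ y in Ω, (u x - u y) * K (x - y)) * v x
            - (∫ y in Ω, (v x - v y) * K (x - y)) * u x)))
        + ∫ x in Ω, (r2 x - r1 x) * (u x * v x) := integral_add hint12 hint3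
    _ = ((∫ x in Ω, (deriv (deriv v) x * u x - deriv (deriv u) x * v x))
        + (∫ x in Ω, ((∫ y in Ω, (u x - u y) * K (x - y)) * v x
            - (∫ y in Ω, (v x - v y) * K (x - y)) * u x)))
        + ∫ x in Ω, (r2 x - r1 x) * (u x * v x) := by rw [integral_add hint1 hint2]
    _ = ∫ x in Ω, (r2 x - r1 x) * (u x * v x) := by
        rw [hsym, hibp]; ring

/-- derivative of the principal eigenvalue with respect to the trait:
`∂_θ λ(θ) = -∫_Ω ∂_θ R(x, θ) ψ^θ(x)² dx`. -/
theorem eigenvalue_derivative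
    (m : ℕ) (a b : Fin (m + 1) → ℝ) (Ω : Set ℝ)
    (hab : ∀ i, a i < b i)
    (hord : ∀ i j : Fin (m + 1), i < j → b i < a j)
    (hΩ : Ω = ⋃ i, Ioo (a i) (b i))
    (A : ℝ) (hA : 0 < A)
    (R : ℝ → ℝ → ℝ) (C_R : ℝ)
    (hRsmooth : ContDiff ℝ 1 (Function.uncurry R))
    (hRbound : ∀ x ∈ closure Ω, ∀ θ ∈ Icc (-A) A,
      |R x θ| ≤ C_R ∧ |pdx R x θ| ≤ C_R ∧ |pdt R x θ| ≤ C_R)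
    (K : ℝ → ℝ) (c_K C_K : ℝ)
    (hKsmooth : ContDiff ℝ 1 K)
    (hKeven : ∀ x, K (-x) = K x)
    (hcK : 0 < c_K)
    (hKbound : ∀ x, c_K ≤ K x ∧ K x ≤ C_K ∧ |deriv K x| ≤ C_K)
    (ρ : ℝ → ℝ) (hρsmooth : ContDiff ℝ (⊤ : ℕ∞) ρ)
    (hρbdd : ∃ M, ∀ x ∈ closure Ω, |ρ x| ≤ M)
    (lam : ℝ → ℝ) (ψ : ℝ → ℝ → ℝ)
    (heig : ∀ θ ∈ Ioo (-A) A,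
      IsSpatialEigen Ω (range a ∪ range b) K R θ ρ (lam θ) (ψ θ))
    (hnorm : ∀ θ ∈ Ioo (-A) A, (∫ x in Ω, (ψ θ x) ^ 2) = 1)
    (hlam : ContDiffOn ℝ 1 lam (Ioo (-A) A))
    (hψdiff : ∀ x : ℝ, ContDiffOn ℝ 1 (fun t => ψ t x) (Ioo (-A) A))
    (hψtC2 : ∀ θ ∈ Ioo (-A) A, ContDiff ℝ 2 (fun x => deriv (fun t => ψ t x) θ))
    (hψtNeu : ∀ θ ∈ Ioo (-A) A, ∀ x ∈ range a ∪ range b,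
      deriv (fun x' => deriv (fun t => ψ t x') θ) x = 0) :
    ∀ θ ∈ Ioo (-A) A, deriv lam θ = -∫ x in Ω, pdt R x θ * (ψ θ x) ^ 2 := by
  intro θ hθ
  have hΩmeas : MeasurableSet Ω := by
    rw [hΩ]; exact MeasurableSet.iUnion (fun i => measurableSet_Ioo)
  have hΩbdd : Bornology.IsBounded Ω := by
    rw [hΩ]; exact Bornology.isBounded_iUnion.mpr (fun i => Metric.isBounded_Ioo _ _)
  have hInt : ∀ {f : ℝ → ℝ}, Continuous f → IntegrableOn f Ω :=
    fun hf => integrableOn_of_cont hΩbdd hf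
  have hIoo_open : IsOpen (Ioo (-A) A) := isOpen_Ioo
  have hIoo_nhds : Ioo (-A) A ∈ 𝓝 θ := hIoo_open.mem_nhds hθ
  have hRc : Continuous (Function.uncurry R) := hRsmooth.continuous
  have contRt : ∀ t : ℝ, Continuous (fun x => R x t) :=
    fun t => hRc.comp (continuous_id.prodMk continuous_const)
  have hρc : Continuous ρ := hρsmooth.continuous
  have hvC2 : ContDiff ℝ 2 (ψ θ) := (heig θ hθ).1
  have hvc : Continuous (ψ θ) := hvC2.continuous
  have hψc : ∀ t ∈ Ioo (-A) A, Continuous (ψ t) := fun t ht => (heig t ht).1.continuous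
  have hvpos : ∀ x ∈ Ω, 0 < ψ θ x := fun x hx => (heig θ hθ).2.1 x (subset_closure hx)
  set F : ℝ → ℝ := fun t => ∫ x in Ω, ψ t x * ψ θ x with hF
  -- the key identity coming from the two eigen-equations
  have hkey : ∀ t ∈ Ioo (-A) A,
      (lam t - lam θ) * F t = ∫ x in Ω, (R x θ - R x t) * (ψ t x * ψ θ x) := by
    intro t ht
    have h := key_identity m a b Ω hab hord hΩ K hKsmooth.continuous hKeven
      (ψ t) (ψ θ) (fun x => R x t - ρ x) (fun x => R x θ - ρ x)
      (heig t ht).1 (heig θ hθ).1 ((contRt t).sub hρc) ((contRt θ).sub hρc)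
      (lam t) (lam θ) (heig t ht).2.2.1 (heig θ hθ).2.2.1
      (fun i => ⟨(heig t ht).2.2.2 (a i) (Or.inl ⟨i, rfl⟩),
                 (heig t ht).2.2.2 (b i) (Or.inr ⟨i, rfl⟩)⟩)
      (fun i => ⟨(heig θ hθ).2.2.2 (a i) (Or.inl ⟨i, rfl⟩),
                 (heig θ hθ).2.2.2 (b i) (Or.inr ⟨i, rfl⟩)⟩)
    rw [h]
    apply setIntegral_congr_fun hΩmeas
    intro x hx
    ring
  have hlne : ∀ᶠ t in 𝓝[≠] θ, t ∈ Ioo (-A) A ∧ t ≠ θ := by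
    have h1 : ∀ᶠ t in 𝓝[≠] θ, t ∈ Ioo (-A) A :=
      Filter.Eventually.filter_mono nhdsWithin_le_nhds
        ((isOpen_Ioo.mem_nhds hθ) : Ioo (-A) A ∈ 𝓝 θ)
    exact h1.and eventually_mem_nhdsWithin
  -- F is at most 1 and nonnegative on Ioo
  have hF_le_one : ∀ t ∈ Ioo (-A) A, F t ≤ 1 := by
    intro t ht
    have hmono : F t ≤ ∫ x in Ω, (ψ t x ^ 2 + ψ θ x ^ 2) / 2 := by
      apply setIntegral_mono_on (hInt ((hψc t ht).mul hvc))
        (hInt ((((hψc t ht).pow 2).add (hvc.pow 2)).div_const 2)) hΩmeas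
      intro x hx
      show ψ t x * ψ θ x ≤ (ψ t x ^ 2 + ψ θ x ^ 2) / 2
      nlinarith [sq_nonneg (ψ t x - ψ θ x)]
    have hval : ∫ x in Ω, (ψ t x ^ 2 + ψ θ x ^ 2) / 2 = 1 := by
      rw [integral_div, integral_add (f := fun x => ψ t x ^ 2) (g := fun x => ψ θ x ^ 2) (hInt ((hψc t ht).pow 2)) (hInt (hvc.pow 2)),
        hnorm t ht, hnorm θ hθ]
      norm_num
    linarith [hmono, hval.le]
  have hF_nonneg : ∀ t ∈ Ioo (-A) A, 0 ≤ F t := by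
    intro t ht
    apply setIntegral_nonneg hΩmeas
    intro x hx
    exact mul_nonneg ((heig t ht).2.1 x (subset_closure hx)).le (hvpos x hx).le
  -- Convergence of F to 1 via Fatou's lemma
  have hFto1 : Tendsto F (𝓝[≠] θ) (𝓝 1) := by
    rw [Filter.tendsto_iff_seq_tendsto]
    intro s hs
    have hsθ : Tendsto s atTop (𝓝 θ) := hs.mono_right nhdsWithin_le_nhds
    obtain ⟨N, hN⟩ := eventually_atTop.mp (hsθ.eventually_mem hIoo_nhds)
    rw [← Filter.tendsto_add_atTop_iff_nat N]
    have hσIoo : ∀ n : ℕ, s (n + N) ∈ Ioo (-A) A := fun n => hN _ (Nat.le_add_left N n)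
    have hσθ : Tendsto (fun n : ℕ => s (n + N)) atTop (𝓝 θ) :=
      hsθ.comp (tendsto_add_atTop_nat N)
    set G : ℕ → ENNReal := fun n => ∫⁻ x in Ω, ENNReal.ofReal (ψ (s (n + N)) x * ψ θ x) with hG
    have hGn : ∀ n, G n = ENNReal.ofReal (F (s (n + N))) := by
      intro n
      rw [hF]
      exact (ofReal_integral_eq_lintegral_ofReal (hInt ((hψc _ (hσIoo n)).mul hvc))
        ((ae_restrict_iff' hΩmeas).mpr (Filter.Eventually.of_forall (fun x hx =>
          mul_nonneg ((heig _ (hσIoo n)).2.1 x (subset_closure hx)).le (hvpos x hx).le)))).symm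
    have hliminf : ENNReal.ofReal 1 ≤ liminf G atTop := by
      have hfatou := lintegral_liminf_le (μ := volume.restrict Ω) (u := atTop)
        (f := fun n x => ENNReal.ofReal (ψ (s (n + N)) x * ψ θ x))
        (fun n => ((hψc _ (hσIoo n)).mul hvc).measurable.ennreal_ofReal)
      refine le_trans ?_ hfatou
      have hcongr : ∫⁻ x in Ω, liminf (fun n => ENNReal.ofReal (ψ (s (n + N)) x * ψ θ x)) atTop
          = ∫⁻ x in Ω, ENNReal.ofReal (ψ θ x * ψ θ x) := by
        apply lintegral_congr_ae
        apply (ae_restrict_iff' hΩmeas).mpr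
        apply Filter.Eventually.of_forall
        intro x hx
        have hcx : ContinuousAt (fun t => ψ t x) θ :=
          ((hψdiff x).continuousOn.continuousAt hIoo_nhds)
        have htd : Tendsto (fun n => ψ (s (n + N)) x * ψ θ x) atTop (𝓝 (ψ θ x * ψ θ x)) :=
          ((hcx.tendsto.comp hσθ).mul_const _)
        exact ((ENNReal.tendsto_ofReal htd).liminf_eq)
      rw [hcongr, ← ofReal_integral_eq_lintegral_ofReal (f := fun x => ψ θ x * ψ θ x) (hInt (hvc.mul hvc))
        ((ae_restrict_iff' hΩmeas).mpr (Filter.Eventually.of_forall (fun x hx =>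
          mul_nonneg (hvpos x hx).le (hvpos x hx).le)))]
      have : ∫ x in Ω, ψ θ x * ψ θ x = 1 := by
        rw [← hnorm θ hθ]
        exact setIntegral_congr_fun hΩmeas (fun x _ => (sq (ψ θ x)).symm ▸ by ring)
      rw [this]
    have hlimsup : limsup G atTop ≤ ENNReal.ofReal 1 := by
      have hev : ∀ᶠ n in atTop, G n ≤ ENNReal.ofReal 1 :=
        Filter.Eventually.of_forall (fun n => by
          rw [hGn n]; exact ENNReal.ofReal_le_ofReal (hF_le_one _ (hσIoo n)))
      exact Filter.limsup_le_of_le (h := hev)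
    have hGtend : Tendsto G atTop (𝓝 (ENNReal.ofReal 1)) :=
      tendsto_of_le_liminf_of_limsup_le hliminf hlimsup
    have htoReal : Tendsto (fun n => (G n).toReal) atTop (𝓝 (ENNReal.ofReal 1).toReal) :=
      (ENNReal.tendsto_toReal (by simp)).comp hGtend
    simp only [ENNReal.toReal_ofReal zero_le_one] at htoReal
    have : (fun n => (G n).toReal) = fun n => F (s (n + N)) := by
      funext n
      rw [hGn n, ENNReal.toReal_ofReal (hF_nonneg _ (hσIoo n))]
    rwa [this] at htoReal
  -- C_R is nonnegative
  have hx0 : (a 0 + b 0) / 2 ∈ Ω := by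
    rw [hΩ]
    exact mem_iUnion.mpr ⟨0, by constructor <;> nlinarith [hab 0]⟩
  have hC_R0 : 0 ≤ C_R :=
    le_trans (abs_nonneg _)
      (hRbound _ (subset_closure hx0) θ ⟨hθ.1.le, hθ.2.le⟩).1
  -- differentiability of R in the trait variable
  have hRdiff : ∀ x t : ℝ, HasDerivAt (fun t' => R x t') (pdt R x t) t := by
    intro x t
    have hd : DifferentiableAt ℝ (fun t' => R x t') t := by
      have : (fun t' => R x t') = (Function.uncurry R) ∘ (fun t' => ((x : ℝ), t')) := rfl
      rw [this]
      exact DifferentiableAt.comp t (hRsmooth.differentiable one_ne_zero (x, t))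
        ((differentiableAt_const x).prodMk differentiableAt_id)
    exact hd.hasDerivAt
  -- uniform bound on trait-slopes of R
  have hslopeR : ∀ x ∈ closure Ω, ∀ t ∈ Ioo (-A) A, |R x t - R x θ| ≤ C_R * |t - θ| := by
    intro x hx t ht
    have := Convex.norm_image_sub_le_of_norm_deriv_le (f := fun t' => R x t')
      (s := Icc (-A) A) (fun y _ => (hRdiff x y).differentiableAt)
      (fun y hy => by
        rw [Real.norm_eq_abs, (hRdiff x y).deriv]
        exact (hRbound x hx y hy).2.2)
      (convex_Icc _ _) (⟨hθ.1.le, hθ.2.le⟩ : θ ∈ Icc (-A) A) ⟨ht.1.le, ht.2.le⟩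
    simpa [Real.norm_eq_abs] using this
  -- limit of the main term T1
  have hT1 : Tendsto (fun t => ∫ x in Ω, ((R x t - R x θ) / (t - θ)) * ψ θ x ^ 2)
      (𝓝[≠] θ) (𝓝 (∫ x in Ω, pdt R x θ * ψ θ x ^ 2)) := by
    apply tendsto_integral_filter_of_dominated_convergence (fun x => C_R * ψ θ x ^ 2)
    · exact Filter.Eventually.of_forall (fun t =>
        ((((contRt t).sub (contRt θ)).div_const _).mul (hvc.pow 2)).aestronglyMeasurable)
    · filter_upwards [hlne] with t ht
      apply (ae_restrict_iff' hΩmeas).mpr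
      apply Filter.Eventually.of_forall
      intro x hx
      have htne : t - θ ≠ 0 := sub_ne_zero.mpr ht.2
      rw [Real.norm_eq_abs, abs_mul, abs_div, abs_pow, sq_abs]
      have hsl : |R x t - R x θ| / |t - θ| ≤ C_R := by
        rw [div_le_iff₀ (abs_pos.mpr htne)]
        exact hslopeR x (subset_closure hx) t ht.1
      have h2 : (0:ℝ) ≤ ψ θ x ^ 2 := sq_nonneg _
      exact mul_le_mul_of_nonneg_right hsl h2
    · exact hInt (continuous_const.mul (hvc.pow 2))
    · apply (ae_restrict_iff' hΩmeas).mpr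
      apply Filter.Eventually.of_forall
      intro x hx
      have hsl := hasDerivAt_iff_tendsto_slope.mp (hRdiff x θ)
      have : Tendsto (fun t => (R x t - R x θ) / (t - θ)) (𝓝[≠] θ) (𝓝 (pdt R x θ)) := by
        apply hsl.congr
        intro t
        rw [slope_def_field]
      exact this.mul_const _
  -- the remainder term B and its convergence to 0
  set B : ℝ → ℝ := fun t => ∫ x in Ω, |ψ t x - ψ θ x| * ψ θ x with hB
  have hBnonneg : ∀ t, 0 ≤ B t := fun t =>
    setIntegral_nonneg hΩmeas (fun x hx => mul_nonneg (abs_nonneg _) (hvpos x hx).le)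
  have hd2 : ∀ t ∈ Ioo (-A) A, ∫ x in Ω, (ψ t x - ψ θ x) ^ 2 = 2 - 2 * F t := by
    intro t ht
    have h1 : IntegrableOn (fun x => ψ t x ^ 2) Ω := hInt ((hψc t ht).pow 2)
    have h2 : IntegrableOn (fun x => ψ θ x ^ 2) Ω := hInt (hvc.pow 2)
    have h3 : IntegrableOn (fun x => ψ t x * ψ θ x) Ω := hInt ((hψc t ht).mul hvc)
    have e1 : (∫ x in Ω, ψ t x ^ 2) + (∫ x in Ω, ψ θ x ^ 2) - 2 * ∫ x in Ω, ψ t x * ψ θ x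
        = ∫ x in Ω, (ψ t x - ψ θ x) ^ 2 := by
      have h12 : IntegrableOn (fun x => ψ t x ^ 2 + ψ θ x ^ 2) Ω := h1.add h2
      have h32 : IntegrableOn (fun x => 2 * (ψ t x * ψ θ x)) Ω := h3.const_mul 2
      rw [← integral_const_mul, ← integral_add h1 h2, ← integral_sub h12 h32]
      exact setIntegral_congr_fun hΩmeas (fun x _ => by ring)
    rw [← e1, hnorm t ht, hnorm θ hθ, hF]
    ring
  have hBle : ∀ t ∈ Ioo (-A) A, ∀ ε : ℝ, 0 < ε → B t ≤ (2 - 2 * F t) / (2 * ε) + ε / 2 := by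
    intro t ht ε hε
    have h1 : IntegrableOn (fun x => (ψ t x - ψ θ x) ^ 2) Ω := hInt (((hψc t ht).sub hvc).pow 2)
    have h2 : IntegrableOn (fun x => ψ θ x ^ 2) Ω := hInt (hvc.pow 2)
    have hmono : B t ≤ ∫ x in Ω, ((ψ t x - ψ θ x) ^ 2 / (2 * ε) + (ε / 2) * ψ θ x ^ 2) := by
      apply setIntegral_mono_on (hInt (((hψc t ht).sub hvc).abs.mul hvc))
        ((h1.div_const _).add (h2.const_mul _)) hΩmeas
      intro x hx
      have h2ε : (0:ℝ) < 2 * ε := by positivity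
      have heq : (ψ t x - ψ θ x) ^ 2 / (2 * ε) + (ε / 2) * ψ θ x ^ 2
          = ((ψ t x - ψ θ x) ^ 2 + ε ^ 2 * ψ θ x ^ 2) / (2 * ε) := by
        field_simp
      show |ψ t x - ψ θ x| * ψ θ x
          ≤ (ψ t x - ψ θ x) ^ 2 / (2 * ε) + (ε / 2) * ψ θ x ^ 2
      rw [heq, le_div_iff₀ h2ε]
      nlinarith [sq_nonneg (|ψ t x - ψ θ x| - ε * ψ θ x), sq_abs (ψ t x - ψ θ x),
        abs_nonneg (ψ t x - ψ θ x), (hvpos x hx).le]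
    have hval : ∫ x in Ω, ((ψ t x - ψ θ x) ^ 2 / (2 * ε) + (ε / 2) * ψ θ x ^ 2)
        = (2 - 2 * F t) / (2 * ε) + ε / 2 := by
      rw [integral_add (h1.div_const _) (h2.const_mul _), integral_div, integral_const_mul,
        hd2 t ht, hnorm θ hθ]
      ring
    linarith [hmono, hval.le, hval.ge]
  have hBto0 : Tendsto B (𝓝[≠] θ) (𝓝 0) := by
    rw [Metric.tendsto_nhds]
    intro δ hδ
    have hF' : ∀ᶠ t in 𝓝[≠] θ, 1 - δ ^ 2 / 8 < F t :=
      hFto1.eventually (eventually_gt_nhds (by nlinarith))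
    filter_upwards [hF', hlne] with t hFt ht
    rw [Real.dist_eq, sub_zero, abs_of_nonneg (hBnonneg t)]
    have h2 := hBle t ht.1 (δ / 2) (by positivity)
    have h3 : (2 - 2 * F t) / (2 * (δ / 2)) < δ / 4 := by
      rw [show (2 : ℝ) * (δ / 2) = δ by ring, div_lt_iff₀ hδ]
      nlinarith
    calc B t ≤ (2 - 2 * F t) / (2 * (δ / 2)) + (δ / 2) / 2 := h2
      _ < δ / 4 + δ / 4 := by linarith
      _ < δ := by linarith
  -- the remainder term T2 tends to 0
  have hT2 : Tendsto (fun t => ∫ x in Ω, ((R x t - R x θ) / (t - θ))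
      * ((ψ t x - ψ θ x) * ψ θ x)) (𝓝[≠] θ) (𝓝 0) := by
    rw [tendsto_zero_iff_abs_tendsto_zero]
    have habs : ∀ᶠ t in 𝓝[≠] θ, |∫ x in Ω, ((R x t - R x θ) / (t - θ))
        * ((ψ t x - ψ θ x) * ψ θ x)| ≤ C_R * B t := by
      filter_upwards [hlne] with t ht
      have htne : t - θ ≠ 0 := sub_ne_zero.mpr ht.2
      have step1 : |∫ x in Ω, ((R x t - R x θ) / (t - θ)) * ((ψ t x - ψ θ x) * ψ θ x)|
          ≤ ∫ x in Ω, |((R x t - R x θ) / (t - θ)) * ((ψ t x - ψ θ x) * ψ θ x)| := by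
        have h := norm_integral_le_integral_norm (μ := volume.restrict Ω)
          (f := fun x => ((R x t - R x θ) / (t - θ)) * ((ψ t x - ψ θ x) * ψ θ x))
        simp only [Real.norm_eq_abs] at h
        exact h
      have step2 : ∫ x in Ω, |((R x t - R x θ) / (t - θ)) * ((ψ t x - ψ θ x) * ψ θ x)|
          ≤ ∫ x in Ω, C_R * (|ψ t x - ψ θ x| * ψ θ x) := by
        apply setIntegral_mono_on
          (hInt (((((contRt t).sub (contRt θ)).div_const _).mul
            (((hψc t ht.1).sub hvc).mul hvc)).abs))
          (hInt (continuous_const.mul ((((hψc t ht.1).sub hvc).abs).mul hvc))) hΩmeas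
        intro x hx
        show |((R x t - R x θ) / (t - θ)) * ((ψ t x - ψ θ x) * ψ θ x)| ≤ C_R * (|ψ t x - ψ θ x| * ψ θ x)
        rw [abs_mul, abs_mul, abs_of_nonneg (hvpos x hx).le]
        have hsl : |(R x t - R x θ) / (t - θ)| ≤ C_R := by
          rw [abs_div, div_le_iff₀ (abs_pos.mpr htne)]
          exact hslopeR x (subset_closure hx) t ht.1
        exact mul_le_mul_of_nonneg_right hsl
          (mul_nonneg (abs_nonneg _) (hvpos x hx).le)
      have step3 : ∫ x in Ω, C_R * (|ψ t x - ψ θ x| * ψ θ x) = C_R * B t :=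
        integral_const_mul _ _
      linarith [le_trans step1 step2, step3.le, step3.ge]
    apply squeeze_zero' (Filter.Eventually.of_forall (fun t => abs_nonneg _)) habs
    simpa using hBto0.const_mul C_R
  -- the slope of lam converges to its derivative
  have hL1 : Tendsto (slope lam θ) (𝓝[≠] θ) (𝓝 (deriv lam θ)) := by
    have hdiff : DifferentiableAt ℝ lam θ :=
      (hlam.contDiffAt hIoo_nhds).differentiableAt one_ne_zero
    exact hasDerivAt_iff_tendsto_slope.mp hdiff.hasDerivAt
  -- the identity between the slope expression and the two integral terms
  have hQeq : ∀ᶠ t in 𝓝[≠] θ, slope lam θ t * F t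
      = -((∫ x in Ω, ((R x t - R x θ) / (t - θ)) * ψ θ x ^ 2)
          + ∫ x in Ω, ((R x t - R x θ) / (t - θ)) * ((ψ t x - ψ θ x) * ψ θ x)) := by
    filter_upwards [hlne] with t ht
    have htI := ht.1
    have htne : t - θ ≠ 0 := sub_ne_zero.mpr ht.2
    have i1 : IntegrableOn (fun x => ((R x t - R x θ) / (t - θ)) * ψ θ x ^ 2) Ω :=
      hInt ((((contRt t).sub (contRt θ)).div_const _).mul (hvc.pow 2))
    have i2 : IntegrableOn
        (fun x => ((R x t - R x θ) / (t - θ)) * ((ψ t x - ψ θ x) * ψ θ x)) Ω :=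
      hInt ((((contRt t).sub (contRt θ)).div_const _).mul (((hψc t htI).sub hvc).mul hvc))
    have hsum : (∫ x in Ω, ((R x t - R x θ) / (t - θ)) * ψ θ x ^ 2)
        + (∫ x in Ω, ((R x t - R x θ) / (t - θ)) * ((ψ t x - ψ θ x) * ψ θ x))
        = ∫ x in Ω, ((R x t - R x θ) / (t - θ)) * (ψ t x * ψ θ x) := by
      rw [← integral_add i1 i2]
      exact setIntegral_congr_fun hΩmeas (fun x _ => by ring)
    rw [hsum, slope_def_field]
    have hstep : (lam t - lam θ) / (t - θ) * F t = ((lam t - lam θ) * F t) / (t - θ) := by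
      ring
    rw [hstep, hkey t htI, ← integral_neg, ← integral_div]
    exact setIntegral_congr_fun hΩmeas (fun x _ => by ring)
  have lim1 : Tendsto (fun t => slope lam θ t * F t) (𝓝[≠] θ) (𝓝 (deriv lam θ * 1)) :=
    hL1.mul hFto1
  have lim2 : Tendsto (fun t => -((∫ x in Ω, ((R x t - R x θ) / (t - θ)) * ψ θ x ^ 2)
      + ∫ x in Ω, ((R x t - R x θ) / (t - θ)) * ((ψ t x - ψ θ x) * ψ θ x)))
      (𝓝[≠] θ) (𝓝 (-((∫ x in Ω, pdt R x θ * ψ θ x ^ 2) + 0))) := (hT1.add hT2).neg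
  have hfinal := tendsto_nhds_unique (Filter.Tendsto.congr' hQeq lim1) lim2
  simpa using hfinal
end
end

section
/- Assume (H1)–(H3). Let θ₁, θ₂ ∈ [−A, A], c₁, c₂ > 0, and for i = 1, 2 let ψ_i be a positive C² function on closure(Ω) with ψ_i′ = 0 at every endpoint of the intervals composing Ω, ∫_Ω ψ_i² dx = 1, satisfying −ψ_i″ + Lψ_i = ψ_i (R(·, θ_i) − c_i ψ_i) on Ω. Assume the cross Rayleigh quotients are nonnegative: 𝓡(θ₁, c₂ψ₂, c₁ψ₁) ≥ 0 and 𝓡(θ₂, c₁ψ₁, c₂ψ₂) ≥ 0. Then c₁ψ₁ = c₂ψ₂ on Ω. If moreover R(x, θ) = r − g(θ − bx)² with constants r ∈ ℝ, g > 0, b ∈ ℝ, and ∫_Ω ∂_θ R(x, θ_i) ψ_i(x)² dx = 0 for i = 1, 2, then θ₁ = θ₂. -/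
open MeasureTheory Set Real Filter Topology

noncomputable section

/-- The Rayleigh quotient. -/
def RayQ (Ω : Set ℝ) (K : ℝ → ℝ) (R : ℝ → ℝ → ℝ) (θ : ℝ) (ρ φ : ℝ → ℝ) : ℝ :=
  ((∫ x in Ω, (deriv φ x) ^ 2)
    + (1 / 2) * (∫ x in Ω, ∫ y in Ω, (φ x - φ y) ^ 2 * K (x - y))
    - ∫ x in Ω, (R x θ - ρ x) * (φ x) ^ 2) / ∫ x in Ω, (φ x) ^ 2



lemma aux_intOn {Ω : Set ℝ} (hb : Bornology.IsBounded Ω) {f : ℝ → ℝ} (hf : Continuous f) :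
    IntegrableOn f Ω := by
  exact (hf.continuousOn.integrableOn_compact hb.isCompact_closure).mono_set subset_closure

lemma aux_ibp (m : ℕ) (a b : Fin (m+1) → ℝ) (Ω : Set ℝ)
    (hab : ∀ i, a i < b i) (hord : ∀ i j : Fin (m+1), i < j → b i < a j)
    (hΩ : Ω = ⋃ i, Ioo (a i) (b i))
    (ψ : ℝ → ℝ) (hψ : ContDiff ℝ 2 ψ)
    (hNeu : ∀ x ∈ range a ∪ range b, deriv ψ x = 0) :
    ∫ x in Ω, ψ x * deriv (deriv ψ) x = - ∫ x in Ω, (deriv ψ x)^2 := by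
  have hψd : ContDiff ℝ 1 (deriv ψ) := by
    have : ContDiff ℝ ((1 : ℕ) + 1) ψ := by norm_num; exact hψ
    exact (contDiff_succ_iff_deriv.mp this).2.2
  have hψ'c : Continuous (deriv ψ) := hψd.continuous
  have hψ''c : Continuous (deriv (deriv ψ)) := hψd.continuous_deriv le_rfl
  have hψc : Continuous ψ := hψ.continuous
  have hb' : Bornology.IsBounded Ω := by
    rw [hΩ]; exact Bornology.isBounded_iUnion.mpr fun i => Metric.isBounded_Ioo _ _
  have hmeas : ∀ i : Fin (m+1), MeasurableSet (Ioo (a i) (b i)) := fun i => measurableSet_Ioo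
  have hdisj : Pairwise (Function.onFun Disjoint fun i : Fin (m+1) => Ioo (a i) (b i)) := by
    intro i j hij
    rcases lt_or_gt_of_ne hij with h | h
    · exact Set.Ioo_disjoint_Ioo.mpr (le_trans inf_le_left ((hord i j h).le.trans le_sup_right))
    · exact Set.Ioo_disjoint_Ioo.mpr (le_trans inf_le_right ((hord j i h).le.trans le_sup_left))
  have key : ∀ i : Fin (m+1), ∫ x in Ioo (a i) (b i), ψ x * deriv (deriv ψ) x
      = - ∫ x in Ioo (a i) (b i), (deriv ψ x)^2 := by
    intro i
    have hle : a i ≤ b i := (hab i).le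
    have h1 : ∫ x in Ioo (a i) (b i), ψ x * deriv (deriv ψ) x
        = ∫ x in (a i)..(b i), ψ x * deriv (deriv ψ) x := by
      rw [intervalIntegral.integral_of_le hle, integral_Ioc_eq_integral_Ioo]
    have h2 : ∫ x in Ioo (a i) (b i), (deriv ψ x)^2
        = ∫ x in (a i)..(b i), (deriv ψ x)^2 := by
      rw [intervalIntegral.integral_of_le hle, integral_Ioc_eq_integral_Ioo]
    rw [h1, h2]
    have hibp := intervalIntegral.integral_mul_deriv_eq_deriv_mul
      (u := ψ) (v := deriv ψ) (u' := deriv ψ) (v' := deriv (deriv ψ))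
      (a := a i) (b := b i)
      (fun x _ => (hψ.differentiable (by norm_num) x).hasDerivAt)
      (fun x _ => (hψd.differentiable one_ne_zero x).hasDerivAt)
      (hψ'c.intervalIntegrable _ _) (hψ''c.intervalIntegrable _ _)
    rw [hibp, hNeu (a i) (Or.inl ⟨i, rfl⟩), hNeu (b i) (Or.inr ⟨i, rfl⟩)]
    simp [pow_two]
  have hiU1 : IntegrableOn (fun x => ψ x * deriv (deriv ψ) x) Ω :=
    aux_intOn hb' (hψc.mul hψ''c)
  have hiU2 : IntegrableOn (fun x => (deriv ψ x)^2) Ω := aux_intOn hb' (hψ'c.pow 2)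
  rw [hΩ] at hiU1 hiU2 ⊢
  rw [integral_iUnion hmeas hdisj hiU1, integral_iUnion hmeas hdisj hiU2,
    tsum_fintype, tsum_fintype, ← Finset.sum_neg_distrib]
  exact Finset.sum_congr rfl fun i _ => key i

lemma aux_intProd {Ω : Set ℝ} (hb : Bornology.IsBounded Ω) {f : ℝ × ℝ → ℝ}
    (hf : Continuous f) :
    Integrable f ((volume.restrict Ω).prod (volume.restrict Ω)) := by
  rw [Measure.prod_restrict]
  exact (hf.continuousOn.integrableOn_compact
      (hb.isCompact_closure.prod hb.isCompact_closure)).mono_set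
    (Set.prod_mono subset_closure subset_closure)

lemma aux_sym {Ω : Set ℝ} (hb : Bornology.IsBounded Ω)
    {ψ K : ℝ → ℝ} (hψ : Continuous ψ) (hK : Continuous K) (hKe : ∀ x, K (-x) = K x) :
    ∫ x in Ω, (∫ y in Ω, ψ x * ((ψ x - ψ y) * K (x - y)))
      = (1/2) * ∫ x in Ω, ∫ y in Ω, (ψ x - ψ y)^2 * K (x - y) := by
  set μ := volume.restrict Ω with hμ
  set G : ℝ × ℝ → ℝ := fun p => ψ p.1 * ((ψ p.1 - ψ p.2) * K (p.1 - p.2)) with hG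
  have hGc : Continuous G := by fun_prop
  have hGi : Integrable G (μ.prod μ) := aux_intProd hb hGc
  set Q : ℝ × ℝ → ℝ := fun p => (ψ p.1 - ψ p.2)^2 * K (p.1 - p.2) with hQ
  have hQc : Continuous Q := by fun_prop
  have hQi : Integrable Q (μ.prod μ) := aux_intProd hb hQc
  have hGs : Integrable (fun p : ℝ × ℝ => G p.swap) (μ.prod μ) :=
    aux_intProd hb (hGc.comp continuous_swap)
  have h1 : ∫ x in Ω, (∫ y in Ω, ψ x * ((ψ x - ψ y) * K (x - y))) = ∫ p, G p ∂(μ.prod μ) :=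
    (MeasureTheory.integral_prod G hGi).symm
  have hswap : ∫ p, G p ∂(μ.prod μ) = ∫ p, G p.swap ∂(μ.prod μ) :=
    (MeasureTheory.integral_prod_swap G).symm
  have hsum : ∀ p : ℝ × ℝ, G p + G p.swap = Q p := by
    intro ⟨x, y⟩
    have : K (y - x) = K (x - y) := by rw [← hKe (x - y)]; ring_nf
    simp only [hG, hQ, Prod.swap]
    rw [this]; ring
  have h2 : (2 : ℝ) * ∫ p, G p ∂(μ.prod μ) = ∫ p, Q p ∂(μ.prod μ) := by
    have := MeasureTheory.integral_add hGi hGs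
    rw [two_mul]
    calc ∫ p, G p ∂(μ.prod μ) + ∫ p, G p ∂(μ.prod μ)
        = ∫ p, G p ∂(μ.prod μ) + ∫ p, G p.swap ∂(μ.prod μ) := by rw [← hswap]
      _ = ∫ p, (G p + G p.swap) ∂(μ.prod μ) := this.symm
      _ = ∫ p, Q p ∂(μ.prod μ) := by simp_rw [hsum]
  have h3 : ∫ p, Q p ∂(μ.prod μ) = ∫ x in Ω, ∫ y in Ω, (ψ x - ψ y)^2 * K (x - y) :=
    MeasureTheory.integral_prod Q hQi
  rw [h1, ← h3, ← h2]; ring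

lemma aux_energy {Ω : Set ℝ} (hb : Bornology.IsBounded Ω) (hm : MeasurableSet Ω)
    {ψ K W : ℝ → ℝ} (hψ : ContDiff ℝ 2 ψ) (hK : Continuous K) (hW : Continuous W)
    (hibp : ∫ x in Ω, ψ x * deriv (deriv ψ) x = - ∫ x in Ω, (deriv ψ x)^2)
    (hsym : ∫ x in Ω, (∫ y in Ω, ψ x * ((ψ x - ψ y) * K (x - y)))
      = (1/2) * ∫ x in Ω, ∫ y in Ω, (ψ x - ψ y)^2 * K (x - y))
    (hpde : ∀ x ∈ Ω, -deriv (deriv ψ) x + (∫ y in Ω, (ψ x - ψ y) * K (x - y)) = ψ x * W x) :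
    (∫ x in Ω, (deriv ψ x)^2)
      + (1/2) * (∫ x in Ω, ∫ y in Ω, (ψ x - ψ y)^2 * K (x - y))
      = ∫ x in Ω, W x * (ψ x)^2 := by
  have hψd : ContDiff ℝ 1 (deriv ψ) := by
    have : ContDiff ℝ ((1 : ℕ) + 1) ψ := by norm_num; exact hψ
    exact (contDiff_succ_iff_deriv.mp this).2.2
  have hψ''c : Continuous (deriv (deriv ψ)) := hψd.continuous_deriv le_rfl
  have hψc : Continuous ψ := hψ.continuous
  set μ := volume.restrict Ω with hμ
  set G : ℝ × ℝ → ℝ := fun p => ψ p.1 * ((ψ p.1 - ψ p.2) * K (p.1 - p.2)) with hG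
  have hGc : Continuous G := by fun_prop
  have hGi : Integrable G (μ.prod μ) := aux_intProd hb hGc
  have hInn : Integrable (fun x => ∫ y in Ω, ψ x * ((ψ x - ψ y) * K (x - y))) μ :=
    hGi.integral_prod_left
  have hi1 : IntegrableOn (fun x => ψ x * deriv (deriv ψ) x) Ω := aux_intOn hb (hψc.mul hψ''c)
  -- main computation
  have step : ∫ x in Ω, (- (ψ x * deriv (deriv ψ) x) + ∫ y in Ω, ψ x * ((ψ x - ψ y) * K (x - y)))
      = ∫ x in Ω, W x * (ψ x)^2 := by
    apply MeasureTheory.setIntegral_congr_fun hm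
    intro x hx
    have h := hpde x hx
    dsimp only
    have hmul : ∫ y in Ω, ψ x * ((ψ x - ψ y) * K (x - y))
        = ψ x * ∫ y in Ω, (ψ x - ψ y) * K (x - y) := MeasureTheory.integral_const_mul _ _
    have hJ : (∫ y in Ω, (ψ x - ψ y) * K (x - y)) = ψ x * W x + deriv (deriv ψ) x := by
      linarith [h]
    rw [hmul, hJ]; ring
  have split : ∫ x in Ω, ((fun x => -(ψ x * deriv (deriv ψ) x)) x
        + (fun x => ∫ y in Ω, ψ x * ((ψ x - ψ y) * K (x - y))) x)
      = (∫ x in Ω, -(ψ x * deriv (deriv ψ) x))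
        + ∫ x in Ω, (∫ y in Ω, ψ x * ((ψ x - ψ y) * K (x - y))) :=
    MeasureTheory.integral_add hi1.neg hInn
  simp only at split
  rw [split, MeasureTheory.integral_neg, hibp, hsym] at step
  linarith [step]

lemma aux_zero {Ω : Set ℝ} (hΩo : IsOpen Ω) {f : ℝ → ℝ} (hf : Continuous f)
    (hpos : ∀ x ∈ Ω, 0 ≤ f x) (hint : (∫ x in Ω, f x) ≤ 0)
    (hI : IntegrableOn f Ω) : ∀ x ∈ Ω, f x = 0 := by
  have hae : 0 ≤ᶠ[ae (volume.restrict Ω)] f :=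
    (ae_restrict_iff' hΩo.measurableSet).mpr (Filter.Eventually.of_forall hpos)
  have hge : 0 ≤ ∫ x in Ω, f x := setIntegral_nonneg hΩo.measurableSet hpos
  have h0 : (∫ x in Ω, f x) = 0 := le_antisymm hint hge
  have hfz : f =ᶠ[ae (volume.restrict Ω)] 0 :=
    (setIntegral_eq_zero_iff_of_nonneg_ae hae hI).mp h0
  have hnull : volume ({x | f x ≠ 0} ∩ Ω) = 0 := by
    have := Filter.eventuallyEq_iff_exists_mem.mp hfz
    have h1 : volume.restrict Ω {x | f x ≠ 0} = 0 := by
      have : {x | f x ≠ 0} ⊆ {x | ¬ f x = (0 : ℝ → ℝ) x} := by intro x hx; simpa using hx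
      exact measure_mono_null this (ae_iff.mp hfz)
    rwa [Measure.restrict_apply (by
      have : {x | f x ≠ 0} = f ⁻¹' ({0}ᶜ) := by ext x; simp
      rw [this]; exact (measurableSet_singleton 0).compl.preimage hf.measurable)] at h1
  by_contra hc
  push_neg at hc
  obtain ⟨x, hxΩ, hx0⟩ := hc
  have hopen : IsOpen ({x | f x ≠ 0} ∩ Ω) := by
    have : {x | f x ≠ 0} = f ⁻¹' ({0}ᶜ) := by ext x; simp
    rw [this]
    exact (isOpen_compl_singleton.preimage hf).inter hΩo
  have : (0 : ENNReal) < volume ({x | f x ≠ 0} ∩ Ω) :=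
    hopen.measure_pos volume ⟨x, hx0, hxΩ⟩
  simp [hnull] at this

lemma aux_pdt {A : ℝ} (hA : 0 < A) {R : ℝ → ℝ → ℝ}
    (hRsmooth : ContDiff ℝ 1 (Function.uncurry R))
    {r g bb : ℝ} {x : ℝ}
    (hform : ∀ θ ∈ Icc (-A) A, R x θ = r - g * (θ - bb * x) ^ 2)
    {θ₀ : ℝ} (hθ₀ : θ₀ ∈ Icc (-A) A) :
    deriv (fun θ' => R x θ') θ₀ = -(2*g) * (θ₀ - bb * x) := by
  have hdf : Differentiable ℝ (fun θ' => R x θ') := by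
    have : (fun θ' => R x θ') = (Function.uncurry R) ∘ (fun θ' => (x, θ')) := rfl
    rw [this]
    exact (hRsmooth.differentiable one_ne_zero).comp (by fun_prop)
  set q : ℝ → ℝ := fun θ' => r - g * (θ' - bb * x) ^ 2 with hq
  have hq' : ∀ θ', HasDerivAt q (-(2*g) * (θ' - bb * x)) θ' := by
    intro θ'
    have h1 : HasDerivAt (fun θ'' : ℝ => θ'' - bb * x) 1 θ' := by
      simpa using (hasDerivAt_id θ').sub_const (bb * x)
    have h2 := ((h1.pow 2).const_mul g).const_sub r
    exact h2.congr_deriv (by ring)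
  have hIcc : θ₀ ∈ closure (Ioo (-A) A) := by
    rwa [closure_Ioo (by linarith : -A ≠ A)]
  have hu : UniqueDiffWithinAt ℝ (Ioo (-A) A) θ₀ :=
    uniqueDiffWithinAt_convex (convex_Ioo _ _) (by rw [interior_Ioo]; exact nonempty_Ioo.mpr (by linarith)) hIcc
  have hfw : HasDerivWithinAt (fun θ' => R x θ') (deriv (fun θ' => R x θ') θ₀) (Ioo (-A) A) θ₀ :=
    (hdf θ₀).hasDerivAt.hasDerivWithinAt
  have hqw : HasDerivWithinAt (fun θ' => R x θ') (-(2*g) * (θ₀ - bb * x)) (Ioo (-A) A) θ₀ := by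
    apply ((hq' θ₀).hasDerivWithinAt).congr
    · intro y hy; exact hform y (Ioo_subset_Icc_self hy)
    · exact hform θ₀ hθ₀
  exact hu.eq_deriv _ hfw hqw



/-- uniqueness of the monomorphic limit. -/
theorem monomorphic_uniqueness
    (m : ℕ) (a b : Fin (m + 1) → ℝ) (Ω : Set ℝ)
    (hab : ∀ i, a i < b i)
    (hord : ∀ i j : Fin (m + 1), i < j → b i < a j)
    (hΩ : Ω = ⋃ i, Ioo (a i) (b i))
    (A : ℝ) (hA : 0 < A)
    (R : ℝ → ℝ → ℝ) (C_R : ℝ)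
    (hRsmooth : ContDiff ℝ 1 (Function.uncurry R))
    (hRbound : ∀ x ∈ closure Ω, ∀ θ ∈ Icc (-A) A,
      |R x θ| ≤ C_R ∧ |pdx R x θ| ≤ C_R ∧ |pdt R x θ| ≤ C_R)
    (K : ℝ → ℝ) (c_K C_K : ℝ)
    (hKsmooth : ContDiff ℝ 1 K)
    (hKeven : ∀ x, K (-x) = K x)
    (hcK : 0 < c_K)
    (hKbound : ∀ x, c_K ≤ K x ∧ K x ≤ C_K ∧ |deriv K x| ≤ C_K)
    (θ₁ θ₂ : ℝ) (hθ₁ : θ₁ ∈ Icc (-A) A) (hθ₂ : θ₂ ∈ Icc (-A) A)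
    (c₁ c₂ : ℝ) (hc₁ : 0 < c₁) (hc₂ : 0 < c₂)
    (ψ₁ ψ₂ : ℝ → ℝ)
    (hψ₁C : ContDiff ℝ 2 ψ₁) (hψ₂C : ContDiff ℝ 2 ψ₂)
    (hψ₁pos : ∀ x ∈ closure Ω, 0 < ψ₁ x) (hψ₂pos : ∀ x ∈ closure Ω, 0 < ψ₂ x)
    (hψ₁Neu : ∀ x ∈ range a ∪ range b, deriv ψ₁ x = 0)
    (hψ₂Neu : ∀ x ∈ range a ∪ range b, deriv ψ₂ x = 0)
    (hψ₁norm : (∫ x in Ω, (ψ₁ x) ^ 2) = 1)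
    (hψ₂norm : (∫ x in Ω, (ψ₂ x) ^ 2) = 1)
    (hpde₁ : ∀ x ∈ Ω, -deriv (deriv ψ₁) x + (∫ y in Ω, (ψ₁ x - ψ₁ y) * K (x - y))
      = ψ₁ x * (R x θ₁ - c₁ * ψ₁ x))
    (hpde₂ : ∀ x ∈ Ω, -deriv (deriv ψ₂) x + (∫ y in Ω, (ψ₂ x - ψ₂ y) * K (x - y))
      = ψ₂ x * (R x θ₂ - c₂ * ψ₂ x))
    (hcross₁ : 0 ≤ RayQ Ω K R θ₁ (fun x => c₂ * ψ₂ x) ψ₁)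
    (hcross₂ : 0 ≤ RayQ Ω K R θ₂ (fun x => c₁ * ψ₁ x) ψ₂) :
    (∀ x ∈ Ω, c₁ * ψ₁ x = c₂ * ψ₂ x) ∧
    (∀ r g bb : ℝ, 0 < g →
      (∀ x ∈ closure Ω, ∀ θ ∈ Icc (-A) A, R x θ = r - g * (θ - bb * x) ^ 2) →
      (∫ x in Ω, pdt R x θ₁ * (ψ₁ x) ^ 2) = 0 →
      (∫ x in Ω, pdt R x θ₂ * (ψ₂ x) ^ 2) = 0 →
      θ₁ = θ₂) := by
  -- basic facts
  have hΩo : IsOpen Ω := by rw [hΩ]; exact isOpen_iUnion fun i => isOpen_Ioo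
  have hΩm : MeasurableSet Ω := hΩo.measurableSet
  have hb' : Bornology.IsBounded Ω := by
    rw [hΩ]; exact Bornology.isBounded_iUnion.mpr fun i => Metric.isBounded_Ioo _ _
  have hψ₁c : Continuous ψ₁ := hψ₁C.continuous
  have hψ₂c : Continuous ψ₂ := hψ₂C.continuous
  have hKc : Continuous K := hKsmooth.continuous
  have hRc : ∀ θ, Continuous fun x => R x θ := fun θ =>
    hRsmooth.continuous.comp (continuous_id.prodMk continuous_const)
  -- energy identities
  have hen₁ := aux_energy hb' hΩm hψ₁C hKc
    (W := fun x => R x θ₁ - c₁ * ψ₁ x) ((hRc θ₁).sub (continuous_const.mul hψ₁c))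
    (aux_ibp m a b Ω hab hord hΩ ψ₁ hψ₁C hψ₁Neu)
    (aux_sym hb' hψ₁c hKc hKeven) hpde₁
  have hen₂ := aux_energy hb' hΩm hψ₂C hKc
    (W := fun x => R x θ₂ - c₂ * ψ₂ x) ((hRc θ₂).sub (continuous_const.mul hψ₂c))
    (aux_ibp m a b Ω hab hord hΩ ψ₂ hψ₂C hψ₂Neu)
    (aux_sym hb' hψ₂c hKc hKeven) hpde₂
  -- cross terms
  have hI₁ : 0 ≤ ∫ x in Ω, (c₂ * ψ₂ x - c₁ * ψ₁ x) * (ψ₁ x) ^ 2 := by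
    simp only [RayQ, hψ₁norm, div_one] at hcross₁
    have hsub : (∫ x in Ω, (R x θ₁ - c₁ * ψ₁ x) * (ψ₁ x) ^ 2)
        - (∫ x in Ω, (R x θ₁ - c₂ * ψ₂ x) * (ψ₁ x) ^ 2)
        = ∫ x in Ω, (c₂ * ψ₂ x - c₁ * ψ₁ x) * (ψ₁ x) ^ 2 := by
      rw [← MeasureTheory.integral_sub
        (aux_intOn hb' (f := fun x => (R x θ₁ - c₁ * ψ₁ x) * (ψ₁ x) ^ 2) (((hRc θ₁).sub (continuous_const.mul hψ₁c)).mul (hψ₁c.pow 2)))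
        (aux_intOn hb' (f := fun x => (R x θ₁ - c₂ * ψ₂ x) * (ψ₁ x) ^ 2) (((hRc θ₁).sub (continuous_const.mul hψ₂c)).mul (hψ₁c.pow 2)))]
      apply setIntegral_congr_fun hΩm; intro x _; dsimp only; ring
    linarith [hcross₁, hen₁, hsub]
  have hI₂ : 0 ≤ ∫ x in Ω, (c₁ * ψ₁ x - c₂ * ψ₂ x) * (ψ₂ x) ^ 2 := by
    simp only [RayQ, hψ₂norm, div_one] at hcross₂
    have hsub : (∫ x in Ω, (R x θ₂ - c₂ * ψ₂ x) * (ψ₂ x) ^ 2)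
        - (∫ x in Ω, (R x θ₂ - c₁ * ψ₁ x) * (ψ₂ x) ^ 2)
        = ∫ x in Ω, (c₁ * ψ₁ x - c₂ * ψ₂ x) * (ψ₂ x) ^ 2 := by
      rw [← MeasureTheory.integral_sub
        (aux_intOn hb' (f := fun x => (R x θ₂ - c₂ * ψ₂ x) * (ψ₂ x) ^ 2) (((hRc θ₂).sub (continuous_const.mul hψ₂c)).mul (hψ₂c.pow 2)))
        (aux_intOn hb' (f := fun x => (R x θ₂ - c₁ * ψ₁ x) * (ψ₂ x) ^ 2) (((hRc θ₂).sub (continuous_const.mul hψ₁c)).mul (hψ₂c.pow 2)))]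
      apply setIntegral_congr_fun hΩm; intro x _; dsimp only; ring
    linarith [hcross₂, hen₂, hsub]
  -- combine
  set f : ℝ → ℝ := fun x => (c₁ * ψ₁ x - c₂ * ψ₂ x) ^ 2 * (c₁ * ψ₁ x + c₂ * ψ₂ x) with hf
  have hfc : Continuous f := by fun_prop
  have hcomb : (∫ x in Ω, f x)
      = -(c₁ ^ 2 * (∫ x in Ω, (c₂ * ψ₂ x - c₁ * ψ₁ x) * (ψ₁ x) ^ 2)
        + c₂ ^ 2 * (∫ x in Ω, (c₁ * ψ₁ x - c₂ * ψ₂ x) * (ψ₂ x) ^ 2)) := by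
    rw [← MeasureTheory.integral_const_mul, ← MeasureTheory.integral_const_mul,
      ← MeasureTheory.integral_add
        (aux_intOn hb' (f := fun x => c₁ ^ 2 * ((c₂ * ψ₂ x - c₁ * ψ₁ x) * ψ₁ x ^ 2)) (continuous_const.mul (((continuous_const.mul hψ₂c).sub
          (continuous_const.mul hψ₁c)).mul (hψ₁c.pow 2))))
        (aux_intOn hb' (f := fun x => c₂ ^ 2 * ((c₁ * ψ₁ x - c₂ * ψ₂ x) * ψ₂ x ^ 2)) (continuous_const.mul (((continuous_const.mul hψ₁c).sub
          (continuous_const.mul hψ₂c)).mul (hψ₂c.pow 2)))),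
      ← MeasureTheory.integral_neg]
    apply setIntegral_congr_fun hΩm; intro x _; simp only [hf]; ring
  have hle : (∫ x in Ω, f x) ≤ 0 := by
    rw [hcomb]
    have := mul_nonneg (sq_nonneg c₁) hI₁
    have := mul_nonneg (sq_nonneg c₂) hI₂
    linarith
  have hfnn : ∀ x ∈ Ω, 0 ≤ f x := by
    intro x hx
    have h1 := hψ₁pos x (subset_closure hx)
    have h2 := hψ₂pos x (subset_closure hx)
    have : 0 ≤ c₁ * ψ₁ x + c₂ * ψ₂ x := by positivity
    exact mul_nonneg (sq_nonneg _) this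
  have hzero := aux_zero hΩo hfc hfnn hle (aux_intOn hb' hfc)
  have part1 : ∀ x ∈ Ω, c₁ * ψ₁ x = c₂ * ψ₂ x := by
    intro x hx
    have h0 := hzero x hx
    simp only [hf] at h0
    have h1 := hψ₁pos x (subset_closure hx)
    have h2 := hψ₂pos x (subset_closure hx)
    have hpos : 0 < c₁ * ψ₁ x + c₂ * ψ₂ x := by positivity
    rcases mul_eq_zero.mp h0 with hs | hp
    · have := sq_eq_zero_iff.mp hs
      linarith
    · linarith
  refine ⟨part1, ?_⟩
  -- Part 2
  intro r g bb hg hform hint₁ hint₂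
  have hpdt : ∀ θ₀ ∈ Icc (-A) A, ∀ x ∈ Ω, pdt R x θ₀ = -(2*g) * (θ₀ - bb * x) := by
    intro θ₀ hθ₀ x hx
    exact aux_pdt hA hRsmooth (hform x (subset_closure hx)) hθ₀
  -- moment identities
  have hmom : ∀ (θ₀ : ℝ), θ₀ ∈ Icc (-A) A → ∀ (ψ : ℝ → ℝ), Continuous ψ →
      (∫ x in Ω, (ψ x) ^ 2) = 1 →
      (∫ x in Ω, pdt R x θ₀ * (ψ x) ^ 2) = 0 →
      θ₀ = bb * ∫ x in Ω, x * (ψ x) ^ 2 := by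
    intro θ₀ hθ₀ ψ hψc hnorm hint
    have hstep : (∫ x in Ω, pdt R x θ₀ * (ψ x) ^ 2)
        = (-(2*g) * θ₀) * (∫ x in Ω, (ψ x) ^ 2)
          + (2*g*bb) * ∫ x in Ω, x * (ψ x) ^ 2 := by
      rw [← MeasureTheory.integral_const_mul, ← MeasureTheory.integral_const_mul,
        ← MeasureTheory.integral_add
          (aux_intOn hb' (f := fun x => -(2*g) * θ₀ * (ψ x) ^ 2) (by fun_prop))
          (aux_intOn hb' (f := fun x => 2*g*bb * (x * (ψ x) ^ 2)) (by fun_prop))]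
      apply setIntegral_congr_fun hΩm; intro x hx
      dsimp only; rw [hpdt θ₀ hθ₀ x hx]; ring
    rw [hint, hnorm] at hstep
    have : 2 * g * (bb * (∫ x in Ω, x * (ψ x) ^ 2) - θ₀) = 0 := by linarith
    have h2g : (2 : ℝ) * g ≠ 0 := by positivity
    have := mul_eq_zero.mp this
    rcases this with h | h
    · exact absurd h h2g
    · linarith
  have hm₁ := hmom θ₁ hθ₁ ψ₁ hψ₁c hψ₁norm hint₁
  have hm₂ := hmom θ₂ hθ₂ ψ₂ hψ₂c hψ₂norm hint₂
  -- c₁ = c₂ via normalization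
  set k : ℝ := c₂ / c₁ with hk
  have hψeq : ∀ x ∈ Ω, ψ₁ x = k * ψ₂ x := by
    intro x hx
    have := part1 x hx
    rw [hk, div_mul_eq_mul_div, eq_div_iff hc₁.ne']
    linarith [this]
  have hk2 : k ^ 2 = 1 := by
    have h1 : (∫ x in Ω, (ψ₁ x) ^ 2) = ∫ x in Ω, k ^ 2 * (ψ₂ x) ^ 2 := by
      apply setIntegral_congr_fun hΩm; intro x hx; dsimp only; rw [hψeq x hx]; ring
    rw [MeasureTheory.integral_const_mul, hψ₂norm, mul_one] at h1
    rw [← h1, hψ₁norm]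
  have hJ : (∫ x in Ω, x * (ψ₁ x) ^ 2) = ∫ x in Ω, x * (ψ₂ x) ^ 2 := by
    have h1 : (∫ x in Ω, x * (ψ₁ x) ^ 2) = ∫ x in Ω, k ^ 2 * (x * (ψ₂ x) ^ 2) := by
      apply setIntegral_congr_fun hΩm; intro x hx; dsimp only; rw [hψeq x hx]; ring
    rw [MeasureTheory.integral_const_mul, hk2, one_mul] at h1
    exact h1
  rw [hm₁, hm₂, hJ]
end
end

section
/- Let (X, μ) be a measure space and let f, g : X → ℝ be measurable functions with f > 0 and g > 0 μ-almost everywhere and f, g ∈ L³(μ). If ∫ f³ dμ ≤ ∫ f² g dμ and ∫ g³ dμ ≤ ∫ g² f dμ, then f = g μ-almost everywhere. -/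
open MeasureTheory
open scoped ENNReal

lemma cube_aux_half : (1:ℝ≥0∞)/(3/2) = 2/3 := by
  rw [ENNReal.div_eq_div_iff (by norm_num) (by norm_num)
    (by norm_num) (ENNReal.div_lt_top (by norm_num) (by norm_num)).ne]
  rw [mul_one, ENNReal.div_mul_cancel (by norm_num) (by norm_num)]

lemma cube_aux1 : (1:ℝ≥0∞)/(3/2) = 1/3 + 1/3 := by
  rw [cube_aux_half, ENNReal.div_add_div_same]; norm_num

lemma cube_aux2 : (1:ℝ≥0∞)/1 = 1/(3/2) + 1/3 := by
  rw [add_comm]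
  rw [cube_aux_half, ENNReal.div_add_div_same]
  norm_num
  rw [ENNReal.div_self (by norm_num) (by norm_num)]

lemma cube_int {X : Type*} [MeasurableSpace X] {μ : Measure X} {a b c : X → ℝ}
    (ha : MemLp a 3 μ) (hb : MemLp b 3 μ) (hc : MemLp c 3 μ) :
    Integrable (fun x => a x * b x * c x) μ := by
  have hab : MemLp (a • b) (3/2 : ℝ≥0∞) μ := hb.smul ha (hpqr := ⟨by simpa only [one_div] using cube_aux1.symm⟩)
  have : MemLp ((a • b) • c) (1 : ℝ≥0∞) μ := hc.smul hab (hpqr := ⟨by simpa only [one_div] using cube_aux2.symm⟩)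
  exact memLp_one_iff_integrable.mp this

/-- if `∫ f³ ≤ ∫ f² g` and `∫ g³ ≤ ∫ g² f` for a.e.-positive
`f, g ∈ L³(μ)`, then `f = g` a.e. -/
theorem cube_integral_lemma {X : Type*} [MeasurableSpace X] (μ : Measure X)
    (f g : X → ℝ) (hf : Measurable f) (hg : Measurable g)
    (hfpos : ∀ᵐ x ∂μ, 0 < f x) (hgpos : ∀ᵐ x ∂μ, 0 < g x)
    (hf3 : MemLp f 3 μ) (hg3 : MemLp g 3 μ)
    (h1 : (∫ x, (f x) ^ 3 ∂μ) ≤ ∫ x, (f x) ^ 2 * g x ∂μ)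
    (h2 : (∫ x, (g x) ^ 3 ∂μ) ≤ ∫ x, (g x) ^ 2 * f x ∂μ) :
    f =ᵐ[μ] g := by
  have hfff : Integrable (fun x => (f x) ^ 3) μ := by
    have := cube_int hf3 hf3 hf3
    exact this.congr (Filter.Eventually.of_forall fun x => by ring)
  have hggg : Integrable (fun x => (g x) ^ 3) μ := by
    have := cube_int hg3 hg3 hg3
    exact this.congr (Filter.Eventually.of_forall fun x => by ring)
  have hffg : Integrable (fun x => (f x) ^ 2 * g x) μ := by
    have := cube_int hf3 hf3 hg3
    exact this.congr (Filter.Eventually.of_forall fun x => by ring)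
  have hggf : Integrable (fun x => (g x) ^ 2 * f x) μ := by
    have := cube_int hg3 hg3 hf3
    exact this.congr (Filter.Eventually.of_forall fun x => by ring)
  set h : X → ℝ := fun x => (f x - g x) ^ 2 * (f x + g x) with hh
  have hint : Integrable h μ := by
    have : Integrable (fun x => ((f x) ^ 3 - (f x) ^ 2 * g x) -
        ((g x) ^ 2 * f x - (g x) ^ 3)) μ := (hfff.sub hffg).sub (hggf.sub hggg)
    exact this.congr (Filter.Eventually.of_forall fun x => by simp [hh]; ring)
  have hIeq : ∫ x, h x ∂μ = ((∫ x, (f x) ^ 3 ∂μ) - ∫ x, (f x) ^ 2 * g x ∂μ)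
      - ((∫ x, (g x) ^ 2 * f x ∂μ) - ∫ x, (g x) ^ 3 ∂μ) := by
    have e1 : ∫ x, h x ∂μ = ∫ x, (((f x) ^ 3 - (f x) ^ 2 * g x)
        - ((g x) ^ 2 * f x - (g x) ^ 3)) ∂μ :=
      integral_congr_ae (Filter.Eventually.of_forall fun x => by simp [hh]; ring)
    have i1 : Integrable (fun x => (f x) ^ 3 - (f x) ^ 2 * g x) μ := hfff.sub hffg
    have i2 : Integrable (fun x => (g x) ^ 2 * f x - (g x) ^ 3) μ := hggf.sub hggg
    rw [e1, integral_sub i1 i2, integral_sub hfff hffg, integral_sub hggf hggg]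
  have hIle : ∫ x, h x ∂μ ≤ 0 := by
    rw [hIeq]; linarith
  have hnonneg : 0 ≤ᵐ[μ] h := by
    filter_upwards [hfpos, hgpos] with x hfx hgx
    have : 0 ≤ (f x - g x) ^ 2 := sq_nonneg _
    have : 0 ≤ f x + g x := by linarith
    positivity
  have hI0 : ∫ x, h x ∂μ = 0 :=
    le_antisymm hIle (integral_nonneg_of_ae hnonneg)
  have hzero : h =ᵐ[μ] 0 := by
    have := (integral_eq_zero_iff_of_nonneg_ae hnonneg hint).mp hI0
    exact this
  filter_upwards [hfpos, hgpos, hzero] with x hfx hgx hx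
  have hx' : (f x - g x) ^ 2 * (f x + g x) = 0 := hx
  have hsum : 0 < f x + g x := by linarith
  have hsq : (f x - g x) ^ 2 = 0 := by
    rcases mul_eq_zero.mp hx' with h' | h'
    · exact h'
    · exact absurd h' hsum.ne'
  have : f x - g x = 0 := by
    exact pow_eq_zero_iff (by norm_num) |>.mp hsq
  linarith
end
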